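/- arXiv:1402.5925 — 6 statements merged into one kernel-verified Lean document; each statement's English description precedes it below -/
import Mathlib

section
/- Let k be a field of characteristic p > 0, let n ≤ p, and let X, Y ∈ M_n(k) be nilpotent. Then XY = YX if and only if exp(X)·exp(Y) = exp(Y)·exp(X), where exp denotes the truncated exponential. -/
open Matrix

/-- The truncated exponential `exp(X) = ∑_{i=0}^{p-1} X^i / i!`. -/
noncomputable def texp {k : Type*} [Field k] {n : ℕ} (p : ℕ)
    (X : Matrix (Fin n) (Fin n) k) : Matrix (Fin n) (Fin n) k :=
  ∑ i ∈ Finset.range p, ((Nat.factorial i : k)⁻¹) • X ^ i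

namespace TexpAux


open Polynomial Finset

set_option linter.unusedSectionVars false
variable {k : Type*} [Field k] {p : ℕ} [CharP k p]

noncomputable def Fpoly (k : Type*) [Field k] (p : ℕ) : k[X] :=
  ∑ i ∈ Finset.Ioo 0 p, C ((i.factorial : k)⁻¹) * X ^ i

noncomputable def Lpoly (k : Type*) [Field k] (p : ℕ) : k[X] :=
  ∑ j ∈ Finset.Ioo 0 p, C ((-1 : k) ^ (j + 1) * (j : k)⁻¹) * X ^ j

lemma coeff_zero_of_Ioo (f : ℕ → k) :
    (∑ i ∈ Finset.Ioo 0 p, C (f i) * X ^ i).coeff 0 = 0 := by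
  rw [finset_sum_coeff]
  refine Finset.sum_eq_zero fun i hi => ?_
  rw [coeff_C_mul, coeff_X_pow, if_neg (by simpa using (mem_Ioo.mp hi).1.ne), mul_zero]

lemma Fpoly_coeff_zero : (Fpoly k p).coeff 0 = 0 := coeff_zero_of_Ioo _
lemma Lpoly_coeff_zero : (Lpoly k p).coeff 0 = 0 := coeff_zero_of_Ioo _

lemma coeff_pow_eq_zero {q : k[X]} (h : q.coeff 0 = 0) {j m : ℕ} (hm : m < j) :
    (q ^ j).coeff m = 0 := by
  have hd : (X : k[X]) ^ j ∣ q ^ j := pow_dvd_pow_of_dvd (X_dvd_iff.mpr h) j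
  exact (X_pow_dvd_iff.mp hd) m hm

lemma natCast_ne_zero (hp : 0 < p) {m : ℕ} (h0 : 0 < m) (hmp : m < p) : (m : k) ≠ 0 := by
  haveI : NeZero p := ⟨hp.ne'⟩
  have hprime : p.Prime := (CharP.char_is_prime_of_pos k p).out
  rw [Ne, CharP.cast_eq_zero_iff k p]
  exact fun hd => absurd (Nat.le_of_dvd h0 hd) (not_le.mpr hmp)

lemma Ioo_eq_map : Finset.Ioo 0 p = Finset.map ⟨Nat.succ, Nat.succ_injective⟩ (Finset.range (p - 1)) := by
  ext x
  simp only [Finset.mem_Ioo, Finset.mem_map, Finset.mem_range, Function.Embedding.coeFn_mk]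
  constructor
  · rintro ⟨h1, h2⟩; exact ⟨x - 1, by omega, by omega⟩
  · rintro ⟨a, ha, rfl⟩; omega

lemma derivative_Fpoly (hp : 0 < p) :
    derivative (Fpoly k p) = ∑ m ∈ Finset.range (p - 1), C ((m.factorial : k)⁻¹) * X ^ m := by
  rw [Fpoly, derivative_sum, Ioo_eq_map, Finset.sum_map]
  refine Finset.sum_congr rfl fun m hm => ?_
  have hm' : m + 1 < p := by simp at hm; omega
  have hne : ((m : k) + 1) ≠ 0 := by
    have := natCast_ne_zero (k := k) hp (Nat.succ_pos m) hm'
    push_cast at this; exact this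
  simp only [Function.Embedding.coeFn_mk, Nat.succ_eq_add_one, derivative_C_mul,
    derivative_X_pow, Nat.add_sub_cancel]
  rw [← mul_assoc, ← C_mul]
  congr 2
  have h1 : (((m + 1).factorial : k)) = ((m : k) + 1) * (m.factorial : k) := by
    push_cast [Nat.factorial_succ]; ring
  push_cast
  rw [h1, mul_inv, mul_assoc, mul_comm ((m.factorial:k))⁻¹, ← mul_assoc,
    inv_mul_cancel₀ hne, one_mul]

lemma derivative_Lpoly (hp : 0 < p) :
    derivative (Lpoly k p) = ∑ m ∈ Finset.range (p - 1), (-X : k[X]) ^ m := by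
  rw [Lpoly, derivative_sum, Ioo_eq_map, Finset.sum_map]
  refine Finset.sum_congr rfl fun m hm => ?_
  have hm' : m + 1 < p := by simp at hm; omega
  have hne : ((m : k) + 1) ≠ 0 := by
    have := natCast_ne_zero (k := k) hp (Nat.succ_pos m) hm'
    push_cast at this; exact this
  simp only [Function.Embedding.coeFn_mk, Nat.succ_eq_add_one, derivative_C_mul,
    derivative_X_pow, Nat.add_sub_cancel]
  have hrhs : (-X : k[X]) ^ m = C ((-1 : k) ^ m) * X ^ m := by
    rw [neg_pow, C_pow, C_neg, C_1]
  rw [hrhs, ← mul_assoc, ← C_mul]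
  congr 2
  push_cast
  rw [mul_assoc, inv_mul_cancel₀ hne, mul_one, pow_succ, pow_succ]
  ring

noncomputable def Gpoly (k : Type*) [Field k] (p : ℕ) : k[X] := (Lpoly k p).comp (Fpoly k p)

lemma one_add_Fpoly (hp : 0 < p) :
    (1 : k[X]) + Fpoly k p = ∑ i ∈ Finset.range p, C ((i.factorial : k)⁻¹) * X ^ i := by
  have h0 : (0 : ℕ) ∈ Finset.range p := by simpa using hp
  have he : Finset.Ioo 0 p = (Finset.range p).erase 0 := by ext x; simp; omega
  rw [Fpoly, he, ← Finset.add_sum_erase _ _ h0]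
  simp

lemma derivative_Fpoly' (hp : 0 < p) :
    derivative (Fpoly k p) =
      (1 + Fpoly k p) - C (((p - 1).factorial : k)⁻¹) * X ^ (p - 1) := by
  rw [derivative_Fpoly hp, one_add_Fpoly hp]
  have : p = (p - 1) + 1 := by omega
  rw [this, Finset.sum_range_succ]
  simp

lemma derivative_Gpoly (hp : 0 < p) :
    derivative (Gpoly k p) =
      (1 - (-(Fpoly k p)) ^ (p - 1))
        - C (((p - 1).factorial : k)⁻¹) * X ^ (p - 1)
            * ∑ m ∈ Finset.range (p - 1), (-(Fpoly k p)) ^ m := by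
  have hcomp : (derivative (Lpoly k p)).comp (Fpoly k p)
      = ∑ m ∈ Finset.range (p - 1), (-(Fpoly k p)) ^ m := by
    rw [derivative_Lpoly hp]
    simp [Polynomial.comp, eval₂_finset_sum, eval₂_pow, eval₂_neg]
  have hgeom : (∑ m ∈ Finset.range (p - 1), (-(Fpoly k p)) ^ m) * (1 + Fpoly k p)
      = 1 - (-(Fpoly k p)) ^ (p - 1) := by
    have := geom_sum_mul (-(Fpoly k p)) (p - 1)
    have h2 : (-(Fpoly k p) - 1) = -(1 + Fpoly k p) := by ring
    rw [h2, mul_neg] at this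
    linear_combination -this
  rw [Gpoly, derivative_comp, hcomp, derivative_Fpoly' hp]
  rw [sub_mul, ← hgeom]
  ring

lemma coeff_derivative_Gpoly (hp : 0 < p) {m : ℕ} (hm : m < p - 1) :
    (derivative (Gpoly k p)).coeff m = if m = 0 then 1 else 0 := by
  rw [derivative_Gpoly hp]
  have h1 : ((-(Fpoly k p)) ^ (p - 1)).coeff m = 0 :=
    coeff_pow_eq_zero (by simp [Fpoly_coeff_zero]) hm
  have h2 : (C (((p - 1).factorial : k)⁻¹) * X ^ (p - 1)
      * ∑ i ∈ Finset.range (p - 1), (-(Fpoly k p)) ^ i).coeff m = 0 := by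
    rw [mul_assoc, mul_comm ((X:k[X]) ^ (p-1)), ← mul_assoc, coeff_mul_X_pow']
    rw [if_neg (by omega)]
  rw [coeff_sub, coeff_sub, h1, h2, sub_zero, sub_zero, coeff_one]

lemma Gpoly_coeff (hp : 0 < p) {m : ℕ} (hm : m < p) :
    (Gpoly k p).coeff m = if m = 1 then 1 else 0 := by
  rcases Nat.eq_zero_or_pos m with rfl | hm0
  · have hF : eval 0 (Fpoly k p) = 0 := (coeff_zero_eq_eval_zero _).symm.trans Fpoly_coeff_zero
    have hL : eval 0 (Lpoly k p) = 0 := (coeff_zero_eq_eval_zero _).symm.trans Lpoly_coeff_zero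
    rw [coeff_zero_eq_eval_zero, Gpoly, eval_comp, hF, hL]
    simp
  · obtain ⟨j, rfl⟩ : ∃ j, m = j + 1 := ⟨m - 1, by omega⟩
    have hj : j < p - 1 := by omega
    have hd := coeff_derivative (Gpoly k p) j
    rw [coeff_derivative_Gpoly hp hj] at hd
    have hne : ((j : k) + 1) ≠ 0 := by
      have := natCast_ne_zero (k := k) hp (Nat.succ_pos j) (by omega : j + 1 < p)
      push_cast at this; exact this
    have := hd.symm
    rcases Nat.eq_zero_or_pos j with rfl | hj0
    · simp only [if_pos rfl] at this
      field_simp at this ⊢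
      linear_combination this
    · rw [if_neg (by omega : ¬ j + 1 = 1)]
      rw [if_neg (by omega : ¬ j = 0)] at this
      exact (mul_eq_zero.mp this).resolve_right hne

lemma X_pow_dvd_Gpoly_sub (hp : 0 < p) : (X : k[X]) ^ p ∣ (Gpoly k p - X) := by
  rw [X_pow_dvd_iff]
  intro d hd
  rw [coeff_sub, Gpoly_coeff hp hd, coeff_X]
  by_cases h : d = 1
  · simp [h]
  · simp [h]
    omega

variable {n : ℕ}

lemma aeval_Gpoly (hp : 0 < p) (A : Matrix (Fin n) (Fin n) k) (hA : A ^ p = 0) :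
    Polynomial.aeval A (Gpoly k p) = A := by
  obtain ⟨R, hR⟩ := X_pow_dvd_Gpoly_sub (k := k) hp
  have := congrArg (Polynomial.aeval A) hR
  rw [_root_.map_sub, _root_.map_mul, _root_.map_pow, aeval_X, hA, zero_mul, sub_eq_zero] at this
  exact this

lemma pow_p_eq_zero (hp : 0 < p) (hnp : n ≤ p) {A : Matrix (Fin n) (Fin n) k}
    (hA : IsNilpotent A) : A ^ p = 0 := by
  have h := Matrix.isNilpotent_charpoly_sub_pow_of_isNilpotent hA
  have h2 : A.charpoly = X ^ (Fintype.card (Fin n)) := sub_eq_zero.mp h.eq_zero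
  have hn : A ^ n = 0 := by
    have h3 := Matrix.aeval_self_charpoly A
    rw [h2, _root_.map_pow, aeval_X, Fintype.card_fin] at h3
    exact h3
  calc A ^ p = A ^ n * A ^ (p - n) := by rw [← pow_add]; congr 1; omega
  _ = 0 := by rw [hn, zero_mul]

lemma commute_aeval_right {A : Type*} [Semiring A] [Algebra k A] {a b : A}
    (h : Commute a b) (f : k[X]) : Commute (Polynomial.aeval a f) b := by
  rw [aeval_eq_sum_range]
  exact Commute.sum_left _ _ _ fun i _ => ((h.pow_left i).smul_left _)

lemma commute_aeval {A : Type*} [Semiring A] [Algebra k A] {a b : A}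
    (h : Commute a b) (f g : k[X]) :
    Commute (Polynomial.aeval a f) (Polynomial.aeval b g) :=
  (commute_aeval_right ((commute_aeval_right h f).symm) g).symm


lemma texp_eq_aeval (hp : 0 < p) (A : Matrix (Fin n) (Fin n) k) :
    texp p A = Polynomial.aeval A (1 + Fpoly k p) := by
  simp only [one_add_Fpoly hp, map_sum, _root_.map_mul, aeval_C, _root_.map_pow, aeval_X, texp,
    Algebra.smul_def]

lemma recover (hp : 0 < p) (hnp : n ≤ p) (A : Matrix (Fin n) (Fin n) k) (hA : IsNilpotent A) :
    Polynomial.aeval (texp p A) ((Lpoly k p).comp (Polynomial.X - 1)) = A := by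
  rw [aeval_comp]
  have h1 : Polynomial.aeval (texp p A) (X - 1 : k[X]) = Polynomial.aeval A (Fpoly k p) := by
    rw [_root_.map_sub, aeval_X, _root_.map_one, texp_eq_aeval hp, _root_.map_add, _root_.map_one]
    rw [add_sub_cancel_left]
  rw [h1, ← aeval_comp, show (Lpoly k p).comp (Fpoly k p) = Gpoly k p from rfl,
    aeval_Gpoly hp A (pow_p_eq_zero hp hnp hA)]

end TexpAux

/-- Over a field of characteristic `p > 0` with `n ≤ p`, nilpotent
matrices `X, Y ∈ M_n(k)` commute if and only if their truncated exponentials commute. -/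
theorem commute_iff_texp_commute {k : Type*} [Field k] {p n : ℕ} [CharP k p] (hp : 0 < p)
    (hnp : n ≤ p)
    (X Y : Matrix (Fin n) (Fin n) k) (hX : IsNilpotent X) (hY : IsNilpotent Y) :
    X * Y = Y * X ↔ texp p X * texp p Y = texp p Y * texp p X := by
  constructor
  · intro h
    rw [TexpAux.texp_eq_aeval hp X, TexpAux.texp_eq_aeval hp Y]
    exact (TexpAux.commute_aeval h _ _).eq
  · intro h
    have hc : Commute (texp p X) (texp p Y) := h
    conv_lhs => rw [← TexpAux.recover hp hnp X hX, ← TexpAux.recover hp hnp Y hY]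
    conv_rhs => rw [← TexpAux.recover hp hnp X hX, ← TexpAux.recover hp hnp Y hY]
    exact (TexpAux.commute_aeval hc _ _).eq
end

section
/- Let p be a prime with p ≥ n and let E ⊆ GL_n(F_p) be an elementary abelian p-subgroup of order p^r. Then every element of E is unipotent, and the set {log(g) : g ∈ E} ⊆ M_n(F_p) is an F_p-linear subspace of dimension r, all of whose elements are nilpotent and pairwise commute. -/
open Matrix

/-- The truncated logarithm `log(u) = ∑_{i=1}^{p-1} (-1)^{i+1} (u-1)^i / i`. -/
noncomputable def tlog {k : Type*} [Field k] {n : ℕ} (p : ℕ)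
    (u : Matrix (Fin n) (Fin n) k) : Matrix (Fin n) (Fin n) k :=
  ∑ i ∈ Finset.Icc 1 (p - 1), ((-1 : k) ^ (i + 1) * (i : k)⁻¹) • (u - 1) ^ i

/-!
For `g ∈ E`, `(g - 1)^p = g^p - 1 = 0`. Commuting `u, v` generate a commutative subalgebra `S`
of `M_n(𝔽_p)`; by Nakayama the chain `(nilradical S)^m • 𝔽_p^n` strictly decreases until it
vanishes, so `(nilradical S)^n = 0`, and `n ≤ p` gives `(nilradical S)^p = 0` with
`u - 1, v - 1 ∈ nilradical S`.

On an ideal `I` with `I^p = 0` every monomial of total degree `≥ p` vanishes, so the truncated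
exponential `exp x = ∑_{k<p} x^k/k!` is a homomorphism `(I, +) → (1 + I, ·)`, injective because
`exp z = 1 + z · (unit)`. It inverts the truncated logarithm on `1 + I`, since
`exp (log (1 + X)) ≡ 1 + X mod X^p` over `𝔽_p`: both sides solve `(1 + X) F' ≡ F mod X^(p-1)`
with `F(0) = 1`, and this equation determines the first `p` coefficients of `F`. Hence
`log (g h) = log g + log h` and `log` is injective on `E`, so `log E` is an additive subgroup of
order `p^r`, i.e. an `𝔽_p`-subspace of dimension `r`.
-/

open Polynomial
open scoped Nat

theorem aeval_eq_zero_of_X_pow_dvd {R A : Type*} [CommSemiring R] [Semiring A] [Algebra R A]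
    {f : R[X]} {n : ℕ} (hf : X ^ n ∣ f) {x : A} (hx : x ^ n = 0) : aeval x f = 0 := by
  obtain ⟨g, rfl⟩ := hf
  rw [map_mul, map_pow, aeval_X, hx, zero_mul]

theorem Commute.aeval_aeval {R A : Type*} [CommSemiring R] [Semiring A] [Algebra R A] {x y : A}
    (h : Commute x y) (f g : R[X]) : Commute (aeval x f) (aeval y g) := by
  have hy : Commute y (aeval x f) :=
    Algebra.commute_of_mem_adjoin_of_forall_mem_commute (aeval_mem_adjoin_singleton R x)
      (by simpa using h.symm)
  exact Algebra.commute_of_mem_adjoin_of_forall_mem_commute (aeval_mem_adjoin_singleton R y)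
    (by simpa using hy.symm)

section TruncatedSeries

variable (p : ℕ) [Fact p.Prime]

theorem natCast_ne_zero_of_lt_prime {i : ℕ} (h0 : i ≠ 0) (hi : i < p) : (i : ZMod p) ≠ 0 := by
  rw [Ne, ZMod.natCast_eq_zero_iff]
  exact fun hdvd => absurd (Nat.le_of_dvd (Nat.pos_of_ne_zero h0) hdvd) (by omega)

theorem factorial_ne_zero_of_lt_prime {k : ℕ} (hk : k < p) : (k ! : ZMod p) ≠ 0 := by
  rw [Ne, ZMod.natCast_eq_zero_iff, (Fact.out : p.Prime).dvd_factorial]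
  omega

theorem inv_factorial_mul_choose {k i : ℕ} (hk : k < p) (hi : i ≤ k) :
    (k ! : ZMod p)⁻¹ * k.choose i = (i ! : ZMod p)⁻¹ * ((k - i)! : ZMod p)⁻¹ := by
  have h : (k.choose i : ZMod p) * i ! * (k - i)! = k ! := by
    rw [← Nat.cast_mul, ← Nat.cast_mul, Nat.choose_mul_factorial_mul_factorial hi]
  have hk' := factorial_ne_zero_of_lt_prime p hk
  have hi' := factorial_ne_zero_of_lt_prime p (lt_of_le_of_lt hi hk)
  have hki' := factorial_ne_zero_of_lt_prime p (lt_of_le_of_lt (Nat.sub_le k i) hk)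
  field_simp
  rw [← h]

noncomputable def logPoly : (ZMod p)[X] :=
  ∑ i ∈ Finset.Icc 1 (p - 1), C ((-1) ^ (i + 1) * (i : ZMod p)⁻¹) * X ^ i

noncomputable def expPoly : (ZMod p)[X] :=
  ∑ k ∈ Finset.range p, C ((k ! : ZMod p)⁻¹) * X ^ k

theorem coeff_logPoly (i : ℕ) : (logPoly p).coeff i =
    if i ∈ Finset.Icc 1 (p - 1) then (-1) ^ (i + 1) * (i : ZMod p)⁻¹ else 0 := by
  simp only [logPoly, finsetSum_coeff, coeff_C_mul_X_pow, Finset.sum_ite_eq]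

theorem coeff_expPoly (k : ℕ) :
    (expPoly p).coeff k = if k < p then (k ! : ZMod p)⁻¹ else 0 := by
  simp only [expPoly, finsetSum_coeff, coeff_C_mul_X_pow, Finset.sum_ite_eq, Finset.mem_range]

theorem X_dvd_logPoly : X ∣ logPoly p := X_dvd_iff.mpr (by simp [coeff_logPoly])

theorem derivative_logPoly :
    derivative (logPoly p) = ∑ j ∈ Finset.range (p - 1), (-X) ^ j := by
  ext d
  have hcoeff : ∀ j, ((-X : (ZMod p)[X]) ^ j).coeff d = if d = j then (-1) ^ j else 0 := by
    intro j
    rw [neg_pow, ← C_1, ← C_neg, ← C_pow, coeff_C_mul_X_pow]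
  simp only [coeff_derivative, coeff_logPoly, finsetSum_coeff, hcoeff, Finset.sum_ite_eq,
    Finset.mem_Icc, Finset.mem_range]
  split_ifs with h1 h2 h2
  · have hd : ((d + 1 : ℕ) : ZMod p) ≠ 0 := natCast_ne_zero_of_lt_prime p (by omega) (by omega)
    push_cast at hd ⊢
    field_simp
    ring
  · omega
  · omega
  · exact zero_mul _

theorem one_add_X_mul_derivative_logPoly :
    (1 + X) * derivative (logPoly p) = 1 - X ^ (p - 1) := by
  have h := mul_neg_geom_sum (-X : (ZMod p)[X]) (p - 1)
  rwa [sub_neg_eq_add, ← derivative_logPoly, neg_pow, ← C_1, ← C_neg, ← C_pow,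
    ZMod.pow_card_sub_one_eq_one (neg_ne_zero.mpr one_ne_zero), C_1, one_mul] at h

theorem derivative_expPoly :
    derivative (expPoly p) = expPoly p - C ((p - 1)! : ZMod p)⁻¹ * X ^ (p - 1) := by
  ext d
  simp only [coeff_derivative, coeff_expPoly, coeff_sub, coeff_C_mul, coeff_X_pow]
  have := (Fact.out : p.Prime).two_le
  split_ifs with h1 h2 h3 h3 h2 h3 <;> try omega
  · have hd : ((d + 1 : ℕ) : ZMod p) ≠ 0 := natCast_ne_zero_of_lt_prime p (by omega) (by omega)
    rw [Nat.factorial_succ, Nat.cast_mul, mul_inv, mul_zero, sub_zero, mul_comm, ← mul_assoc,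
      Nat.cast_succ, mul_inv_cancel₀ (by exact_mod_cast hd), one_mul]
  · rw [h3]
    ring
  · ring

theorem X_pow_dvd_of_one_add_X_mul_derivative_sub {G : (ZMod p)[X]} (h0 : G.coeff 0 = 0)
    (h : X ^ (p - 1) ∣ (1 + X) * derivative G - G) : X ^ p ∣ G := by
  rw [X_pow_dvd_iff] at h ⊢
  intro d hd
  induction d with
  | zero => exact h0
  | succ d ih =>
    have hXd : (X * derivative G).coeff d = G.coeff d * d := by
      cases d <;> simp [coeff_X_mul, coeff_derivative]
    have hrec := h d (by omega)
    rw [coeff_sub, add_mul, one_mul, coeff_add, hXd, ih (by omega), coeff_derivative] at hrec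
    have hd : ((d + 1 : ℕ) : ZMod p) ≠ 0 := natCast_ne_zero_of_lt_prime p (by omega) hd
    push_cast at hd
    simpa [hd] using hrec

theorem X_pow_dvd_expPoly_comp_logPoly_sub :
    X ^ p ∣ (expPoly p).comp (logPoly p) - (1 + X) := by
  set F := (expPoly p).comp (logPoly p)
  refine X_pow_dvd_of_one_add_X_mul_derivative_sub p ?_ ?_
  · have hL0 : (logPoly p).eval 0 = 0 := by simp [← coeff_zero_eq_eval_zero, coeff_logPoly]
    have hE0 : (expPoly p).eval 0 = 1 := by
      simp [← coeff_zero_eq_eval_zero, coeff_expPoly, (Fact.out : p.Prime).pos]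
    simp [F, coeff_zero_eq_eval_zero, eval_comp, hL0, hE0]
  · obtain ⟨Q, hQ⟩ := X_dvd_logPoly p
    have hLpow : logPoly p ^ (p - 1) = X ^ (p - 1) * Q ^ (p - 1) := by rw [hQ, mul_pow]
    have hder : derivative (F - (1 + X)) = derivative (logPoly p) *
        (F - C ((p - 1)! : ZMod p)⁻¹ * logPoly p ^ (p - 1)) - 1 := by
      simp only [F, derivative_sub, derivative_comp, derivative_expPoly, sub_comp, mul_comp,
        C_comp, X_pow_comp, derivative_add, derivative_one, derivative_X, zero_add]
    refine ⟨-F - C ((p - 1)! : ZMod p)⁻¹ * Q ^ (p - 1) * (1 - X ^ (p - 1)), ?_⟩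
    rw [hder]
    linear_combination (F - C ((p - 1)! : ZMod p)⁻¹ * logPoly p ^ (p - 1)) *
      one_add_X_mul_derivative_logPoly p - C ((p - 1)! : ZMod p)⁻¹ * (1 - X ^ (p - 1)) * hLpow

end TruncatedSeries

section TruncatedExpLog

variable {p : ℕ} [Fact p.Prime] {A : Type*}

theorem aeval_expPoly [Semiring A] [Algebra (ZMod p) A] (x : A) :
    aeval x (expPoly p) = ∑ k ∈ Finset.range p, (k ! : ZMod p)⁻¹ • x ^ k := by
  simp [expPoly, Algebra.smul_def]

theorem aeval_expPoly_zero [Semiring A] [Algebra (ZMod p) A] : aeval (0 : A) (expPoly p) = 1 := by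
  rw [← coeff_zero_eq_aeval_zero', coeff_expPoly, if_pos (Fact.out : p.Prime).pos]
  simp

theorem aeval_expPoly_aeval_logPoly [Ring A] [Algebra (ZMod p) A] {u : A} (hu : u ^ p = 0) :
    aeval (aeval u (logPoly p)) (expPoly p) = 1 + u := by
  have h := aeval_eq_zero_of_X_pow_dvd (X_pow_dvd_expPoly_comp_logPoly_sub p) hu
  rwa [map_sub, aeval_comp, map_add, map_one, aeval_X, sub_eq_zero] at h

variable [CommRing A] [Algebra (ZMod p) A] {I : Ideal A}

theorem aeval_logPoly_mem {u : A} (hu : u ∈ I) : aeval u (logPoly p) ∈ I := by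
  obtain ⟨Q, hQ⟩ := X_dvd_logPoly p
  rw [hQ, map_mul, aeval_X]
  exact I.mul_mem_right _ hu

theorem eq_zero_of_aeval_expPoly_eq_one {z : A} (hz : IsNilpotent z)
    (h : aeval z (expPoly p) = 1) : z = 0 := by
  have hdvd : X ^ 2 ∣ expPoly p - (1 + X) := by
    have := (Fact.out : p.Prime).two_le
    refine X_pow_dvd_iff.mpr fun d hd => ?_
    interval_cases d <;> simp [coeff_expPoly, coeff_one, coeff_X, show 1 < p by omega,
      (Fact.out : p.Prime).pos]
  obtain ⟨Q, hQ⟩ := hdvd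
  have hunit : IsUnit (1 + z * aeval z Q) :=
    (Commute.isNilpotent_mul_right (Commute.all _ _) hz).isUnit_one_add
  rw [sub_eq_iff_eq_add] at hQ
  rw [hQ, map_add, map_add, map_mul, map_one, aeval_X, map_pow, aeval_X] at h
  exact hunit.mul_left_eq_zero.mp (by linear_combination h)

theorem aeval_expPoly_add (hI : I ^ p = 0) {x y : A} (hx : x ∈ I) (hy : y ∈ I) :
    aeval (x + y) (expPoly p) = aeval x (expPoly p) * aeval y (expPoly p) := by
  have hvanish : ∀ i j, p ≤ i + j → x ^ i * y ^ j = 0 := fun i j hij => by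
    have hmem : x ^ i * y ^ j ∈ I ^ (i + j) := by
      rw [pow_add]
      exact Ideal.mul_mem_mul (Ideal.pow_mem_pow hx i) (Ideal.pow_mem_pow hy j)
    simpa [hI] using Ideal.pow_le_pow_right hij hmem
  let c : ℕ → ℕ → ZMod p := fun i j => (i ! : ZMod p)⁻¹ * (j ! : ZMod p)⁻¹
  calc aeval (x + y) (expPoly p)
      = ∑ k ∈ Finset.range p, ∑ i ∈ Finset.range (k + 1),
          c i (k - i) • (x ^ i * y ^ (k - i)) := by
        rw [aeval_expPoly]
        refine Finset.sum_congr rfl fun k hk => ?_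
        rw [add_pow, Finset.smul_sum]
        refine Finset.sum_congr rfl fun i hi => ?_
        rw [mul_comm, ← nsmul_eq_mul, ← Nat.cast_smul_eq_nsmul (ZMod p), smul_smul,
          inv_factorial_mul_choose p (Finset.mem_range.mp hk)
            (Nat.lt_succ_iff.mp (Finset.mem_range.mp hi))]
    _ = ∑ i ∈ Finset.range p, ∑ j ∈ Finset.range (p - i), c i j • (x ^ i * y ^ j) :=
        Finset.sum_range_diag_flip p fun i j => c i j • (x ^ i * y ^ j)
    _ = ∑ i ∈ Finset.range p, ∑ j ∈ Finset.range p, c i j • (x ^ i * y ^ j) := by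
        refine Finset.sum_congr rfl fun i _ => Finset.sum_subset (by simp) fun j _ hj => ?_
        rw [hvanish i j (by simp at hj; omega), smul_zero]
    _ = aeval x (expPoly p) * aeval y (expPoly p) := by
        simp only [c, aeval_expPoly, Finset.sum_mul_sum, smul_mul_smul_comm]

theorem aeval_expPoly_injOn (hI : I ^ p = 0) :
    Set.InjOn (fun x : A => aeval x (expPoly p)) I := by
  intro x hx y hy hxy
  have hinv : aeval y (expPoly p) * aeval (-y) (expPoly p) = 1 := by
    rw [← aeval_expPoly_add hI hy (I.neg_mem hy), add_neg_cancel, aeval_expPoly_zero]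
  have hone : aeval (x - y) (expPoly p) = 1 := by
    rw [sub_eq_add_neg, aeval_expPoly_add hI hx (I.neg_mem hy)]
    exact (congrArg (· * aeval (-y) (expPoly p)) hxy).trans hinv
  exact sub_eq_zero.mp (eq_zero_of_aeval_expPoly_eq_one
    ⟨p, Ideal.pow_eq_zero_of_mem hI le_rfl (I.sub_mem hx hy)⟩ hone)

theorem aeval_logPoly_mul (hI : I ^ p = 0) {u v : A} (hu : u ∈ I) (hv : v ∈ I) :
    aeval ((1 + u) * (1 + v) - 1) (logPoly p) = aeval u (logPoly p) + aeval v (logPoly p) := by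
  have hw : (1 + u) * (1 + v) - 1 ∈ I := by
    rw [show (1 + u) * (1 + v) - 1 = u + v * (1 + u) by ring]
    exact I.add_mem hu (I.mul_mem_right _ hv)
  refine aeval_expPoly_injOn hI (aeval_logPoly_mem hw)
    (I.add_mem (aeval_logPoly_mem hu) (aeval_logPoly_mem hv)) ?_
  simp only
  rw [aeval_expPoly_add hI (aeval_logPoly_mem hu) (aeval_logPoly_mem hv),
    aeval_expPoly_aeval_logPoly (Ideal.pow_eq_zero_of_mem hI le_rfl hw),
    aeval_expPoly_aeval_logPoly (Ideal.pow_eq_zero_of_mem hI le_rfl hu),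
    aeval_expPoly_aeval_logPoly (Ideal.pow_eq_zero_of_mem hI le_rfl hv)]
  ring

end TruncatedExpLog

theorem Submodule.eq_bot_of_antitone_of_eq_succ {K V : Type*} [Field K] [AddCommGroup V]
    [Module K V] [FiniteDimensional K V] (W : ℕ → Submodule K V) (hW : Antitone W)
    (hstab : ∀ m, W (m + 1) = W m → W m = ⊥) : W (Module.finrank K V) = ⊥ := by
  have key : ∀ m, W m = ⊥ ∨ Module.finrank K (W m) + m ≤ Module.finrank K V := by
    intro m
    induction m with
    | zero => exact Or.inr (Submodule.finrank_le _)
    | succ m ih =>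
      have hle : W (m + 1) ≤ W m := hW (Nat.le_succ m)
      by_cases heq : W (m + 1) = W m
      · exact Or.inl (heq.trans (hstab m heq))
      · refine ih.imp (fun hbot : W m = ⊥ => le_bot_iff.mp (hbot ▸ hle)) fun hdim => ?_
        have := Submodule.finrank_lt_finrank_of_lt (lt_of_le_of_ne hle heq)
        omega
  exact (key _).elim id fun h => Submodule.finrank_eq_zero.mp (by omega)

theorem nilradical_pow_finrank_eq_bot {K R V : Type*} [Field K] [CommRing R] [Algebra K R]
    [AddCommGroup V] [Module K V] [FiniteDimensional K V] (ρ : R →ₐ[K] Module.End K V)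
    (hρ : Function.Injective ρ) : nilradical R ^ Module.finrank K V = ⊥ := by
  let _ : Module R V := Module.compHom V (ρ : R →+* Module.End K V)
  have _ : IsScalarTower K R V := ⟨fun k r v => by
    change ρ (k • r) v = k • ρ r v
    rw [map_smul, LinearMap.smul_apply]⟩
  have _ : IsNoetherian R V := isNoetherian_of_tower K inferInstance
  set I := nilradical R
  let W : ℕ → Submodule R V := fun m => I ^ m • ⊤
  have hW : Antitone fun m => (W m).restrictScalars K := fun m k hmk =>
    Submodule.restrictScalars_mono K (Submodule.smul_mono_left (Ideal.pow_le_pow_right hmk))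
  have hstab : ∀ m, (W (m + 1)).restrictScalars K = (W m).restrictScalars K →
      (W m).restrictScalars K = ⊥ := by
    intro m heq
    rw [Submodule.restrictScalars_inj] at heq
    rw [Submodule.restrictScalars_eq_bot_iff]
    refine Submodule.eq_bot_of_le_smul_of_le_jacobson_bot I _ (IsNoetherian.noetherian _)
      ?_ Ideal.radical_le_jacobson
    refine (heq.symm.trans ?_).le
    simp only [W, pow_succ', Submodule.mul_smul]
  have hbot := Submodule.eq_bot_of_antitone_of_eq_succ _ hW hstab
  rw [Submodule.restrictScalars_eq_bot_iff] at hbot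
  refine eq_bot_iff.mpr fun x hx => (Submodule.mem_bot R).mpr (hρ ?_)
  ext v
  have hxv : x • v ∈ W (Module.finrank K V) := Submodule.smul_mem_smul hx Submodule.mem_top
  rw [hbot] at hxv
  rw [map_zero]
  exact (Submodule.mem_bot R).mp hxv

theorem finrank_toZModSubmodule_range {p : ℕ} [Fact p.Prime] {G M : Type*} [AddGroup G]
    [AddCommGroup M] [Module (ZMod p) M] [Module.Finite (ZMod p) M] {f : G →+ M}
    (hf : Function.Injective f) {r : ℕ} (hG : Nat.card G = p ^ r) :
    Module.finrank (ZMod p) (AddSubgroup.toZModSubmodule p f.range) = r := by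
  have hcard : Nat.card (AddSubgroup.toZModSubmodule p f.range) = p ^ r :=
    hG ▸ (Nat.card_congr (AddMonoidHom.ofInjective hf).toEquiv).symm
  rw [Module.natCard_eq_pow_finrank (K := ZMod p), Nat.card_zmod] at hcard
  exact Nat.pow_right_injective (Fact.out : p.Prime).two_le hcard

section Matrices

variable {p : ℕ} [Fact p.Prime]

theorem sub_one_pow_eq_zero_of_pow_eq_one {A : Type*} [Ring A] [Algebra (ZMod p) A] {x : A}
    (hx : x ^ p = 1) : (x - 1) ^ p = 0 := by
  cases subsingleton_or_nontrivial A
  · exact Subsingleton.elim _ _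
  · have := charP_of_injective_algebraMap (algebraMap (ZMod p) A).injective p
    rw [sub_pow_char_of_commute p (Commute.one_right x), hx, one_pow, sub_self]

variable {n : ℕ}

theorem tlog_eq_aeval (u : Matrix (Fin n) (Fin n) (ZMod p)) :
    tlog p u = aeval (u - 1) (logPoly p) := by
  simp only [tlog, logPoly, map_sum, map_mul, map_pow, aeval_X, aeval_C, Algebra.smul_def]

theorem isNilpotent_tlog {u : Matrix (Fin n) (Fin n) (ZMod p)} (hu : IsNilpotent (u - 1)) :
    IsNilpotent (tlog p u) := by
  obtain ⟨Q, hQ⟩ := X_dvd_logPoly p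
  have hcomm := Commute.aeval_aeval (Commute.refl (u - 1)) X Q
  rw [aeval_X] at hcomm
  rw [tlog_eq_aeval, hQ, map_mul, aeval_X]
  exact hcomm.isNilpotent_mul_right hu

theorem commute_tlog {u v : Matrix (Fin n) (Fin n) (ZMod p)} (huv : Commute u v) :
    Commute (tlog p u) (tlog p v) := by
  rw [tlog_eq_aeval, tlog_eq_aeval]
  exact ((huv.sub_right (Commute.one_right u)).sub_left (Commute.one_left _)).aeval_aeval _ _

theorem eq_of_tlog_eq {u v : Matrix (Fin n) (Fin n) (ZMod p)} (hu : (u - 1) ^ p = 0)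
    (hv : (v - 1) ^ p = 0) (h : tlog p u = tlog p v) : u = v := by
  have hexp := congrArg (aeval · (expPoly p)) h
  simpa [tlog_eq_aeval, aeval_expPoly_aeval_logPoly hu, aeval_expPoly_aeval_logPoly hv] using hexp

open scoped IsMulCommutative in
theorem tlog_mul_of_commute (hnp : n ≤ p) {u v : Matrix (Fin n) (Fin n) (ZMod p)}
    (huv : Commute u v) (hu : IsNilpotent (u - 1)) (hv : IsNilpotent (v - 1)) :
    tlog p (u * v) = tlog p u + tlog p v := by
  let S := Algebra.adjoin (ZMod p) {u, v}
  have : IsMulCommutative S := Algebra.isMulCommutative_adjoin (ZMod p) (by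
    simp only [Set.mem_insert_iff, Set.mem_singleton_iff]
    rintro _ (rfl | rfl) _ (rfl | rfl) <;> first | rfl | exact huv.eq | exact huv.eq.symm)
  have hval : Function.Injective S.val := Subtype.val_injective
  have hnil : nilradical S ^ p = 0 := by
    have h := nilradical_pow_finrank_eq_bot
      ((Matrix.toLinAlgEquiv' : _ ≃ₐ[ZMod p] _).toAlgHom.comp S.val)
      ((Matrix.toLinAlgEquiv' : _ ≃ₐ[ZMod p] _).injective.comp hval)
    rw [Module.finrank_fin_fun] at h
    exact le_bot_iff.mp (h ▸ Ideal.pow_le_pow_right hnp)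
  let a : S := ⟨u, Algebra.subset_adjoin (by simp)⟩
  let b : S := ⟨v, Algebra.subset_adjoin (by simp)⟩
  have ha : a - 1 ∈ nilradical S := (IsNilpotent.map_iff hval).mp hu
  have hb : b - 1 ∈ nilradical S := (IsNilpotent.map_iff hval).mp hv
  have key := congrArg S.val (aeval_logPoly_mul hnil ha hb)
  simp only [map_add, ← aeval_algHom_apply] at key
  simpa [tlog_eq_aeval, a, b] using key

end Matrices

/-- Let `p ≥ n` be a prime and let `E ⊆ GL_n(𝔽_p)` be an elementary
abelian `p`-subgroup of order `p^r` (i.e. a finite abelian subgroup of exponent dividing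
`p` and of order `p^r`).  Then every element of `E` is unipotent, and
`{log g : g ∈ E}` is an `𝔽_p`-linear subspace of `M_n(𝔽_p)` of dimension `r`, all of
whose elements are nilpotent and pairwise commute. -/
theorem tlog_image_of_elementary_abelian {p n r : ℕ} [Fact p.Prime] (hnp : n ≤ p)
    (E : Subgroup (GL (Fin n) (ZMod p)))
    (habelian : ∀ g ∈ E, ∀ h ∈ E, g * h = h * g)
    (hexp : ∀ g ∈ E, g ^ p = 1)
    (hcard : Nat.card E = p ^ r) :
    (∀ g ∈ E, IsNilpotent ((g : Matrix (Fin n) (Fin n) (ZMod p)) - 1)) ∧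
    ∃ V : Submodule (ZMod p) (Matrix (Fin n) (Fin n) (ZMod p)),
      (V : Set (Matrix (Fin n) (Fin n) (ZMod p))) =
        (fun g : GL (Fin n) (ZMod p) => tlog p (g : Matrix (Fin n) (Fin n) (ZMod p))) ''
          (E : Set (GL (Fin n) (ZMod p))) ∧
      Module.finrank (ZMod p) V = r ∧
      (∀ M ∈ V, IsNilpotent M) ∧
      (∀ M ∈ V, ∀ N ∈ V, M * N = N * M) := by
  have hunip : ∀ g ∈ E, ((g : Matrix (Fin n) (Fin n) (ZMod p)) - 1) ^ p = 0 := fun g hg =>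
    sub_one_pow_eq_zero_of_pow_eq_one <| by
      rw [← Units.val_pow_eq_pow_val, hexp g hg, Units.val_one]
  have hcomm : ∀ g ∈ E, ∀ h ∈ E, Commute (g : Matrix (Fin n) (Fin n) (ZMod p)) h :=
    fun g hg h hh => by
      rw [Commute, SemiconjBy, ← Units.val_mul, ← Units.val_mul, habelian g hg h hh]
  let f : Additive E →+ Matrix (Fin n) (Fin n) (ZMod p) :=
    AddMonoidHom.mk' (fun g => tlog p ((g.toMul : GL (Fin n) (ZMod p)) : Matrix _ _ _))
      fun g h => by
        simpa using tlog_mul_of_commute hnp (hcomm _ g.toMul.2 _ h.toMul.2)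
          ⟨p, hunip _ g.toMul.2⟩ ⟨p, hunip _ h.toMul.2⟩
  have hf : Function.Injective f := fun g h hgh =>
    Additive.toMul.injective <| Subtype.ext <| Units.ext <|
      eq_of_tlog_eq (hunip _ g.toMul.2) (hunip _ h.toMul.2) hgh
  refine ⟨fun g hg => ⟨p, hunip g hg⟩, AddSubgroup.toZModSubmodule p f.range, ?_,
    finrank_toZModSubmodule_range hf hcard, ?_, ?_⟩
  · ext M
    constructor
    · rintro ⟨g, rfl⟩
      exact ⟨g.toMul, g.toMul.2, rfl⟩
    · rintro ⟨g, hg, rfl⟩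
      exact ⟨Additive.ofMul ⟨g, hg⟩, rfl⟩
  · rintro _ ⟨g, rfl⟩
    exact isNilpotent_tlog ⟨p, hunip _ g.toMul.2⟩
  · rintro _ ⟨g, rfl⟩ _ ⟨h, rfl⟩
    exact (commute_tlog (hcomm _ g.toMul.2 _ h.toMul.2)).eq
end

section
/- Let p be a prime with p ≥ n and let q = p^d. Then every elementary abelian p-subgroup of GL_n(F_q) has order at most q^{⌊n²/4⌋}, and there exists an elementary abelian p-subgroup of GL_n(F_q) of order exactly q^{⌊n²/4⌋}. In particular, the largest rank of an elementary abelian p-subgroup of GL_n(F_q) is ⌊n²/4⌋·d. -/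
/-!
If `E` is elementary abelian, then `(g - 1) ^ p = g ^ p - 1 = 0` for `g ∈ E`, so `g ↦ g - 1` embeds
`E` into the linear span `L` of pairwise commuting nilpotent matrices, and `|E| ≤ q ^ dim L`.
Such an `L` has dimension at most `⌊n²/4⌋`: choose `v₀` for which `W = L v₀` has the largest
dimension `s`. The kernel `K` of `a ↦ a v₀` kills `W + k v₀` by commutativity, and perturbing `v₀`
to `v₀ + t w` (possible as soon as `k` has more than `s + 1` elements, which `q ≥ p ≥ n` provides)
shows that `K` maps everything into `W`. Hence `dim L ≤ s + (n - s - 1) s = s (n - s) ≤ n²/4`.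
Conversely, the matrices `[[1, B], [0, 1]]` with `B` of size `⌊n/2⌋ × ⌈n/2⌉` form an elementary
abelian subgroup of order `q ^ ⌊n²/4⌋`.
-/

open Matrix

/-- An elementary abelian `p`-subgroup: an abelian subgroup of exponent dividing `p`. -/
def IsElemAbelian (p : ℕ) {G : Type*} [Group G] (E : Subgroup G) : Prop :=
  (∀ g ∈ E, ∀ h ∈ E, g * h = h * g) ∧ ∀ g ∈ E, g ^ p = 1

open Module Submodule LinearMap

theorem Nat.mul_sub_le_sq_div_four (s n : ℕ) : s * (n - s) ≤ n ^ 2 / 4 := by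
  rw [Nat.le_div_iff_mul_le four_pos]
  rcases le_total s n with h | h
  · obtain ⟨r, rfl⟩ := Nat.exists_eq_add_of_le h
    rw [Nat.add_sub_cancel_left]
    nlinarith [sq_nonneg ((s : ℤ) - r)]
  · simp [Nat.sub_eq_zero_of_le h]

theorem Nat.div_two_mul_sub_div_two (n : ℕ) : n / 2 * (n - n / 2) = n ^ 2 / 4 := by
  rcases Nat.even_or_odd' n with ⟨r, rfl | rfl⟩
  · rw [show 2 * r / 2 = r by omega, show 2 * r - r = r by omega,
      show (2 * r) ^ 2 = 4 * (r * r) by ring, Nat.mul_div_cancel_left _ four_pos]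
  · rw [show (2 * r + 1) / 2 = r by omega, show 2 * r + 1 - r = r + 1 by omega,
      show (2 * r + 1) ^ 2 = 1 + 4 * (r * (r + 1)) by ring, Nat.add_mul_div_left _ _ four_pos]
    simp

section LinearAlgebra

variable {k : Type*} [Field k]

/-- `det (1 + u⁻¹ • B) = u⁻ᵐ χ₋B(u)` with `m = card ι`, and `χ₋B` has the root `0` among at most
`m` roots, so some `u ≠ 0` is not a root. -/
theorem Matrix.exists_ne_zero_det_one_add_smul_ne_zero [Fintype k] {ι : Type*} [Fintype ι]
    [DecidableEq ι] {B : Matrix ι ι k} (hB : B.det = 0) (hι : Fintype.card ι < Fintype.card k) :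
    ∃ t : k, t ≠ 0 ∧ (1 + t • B).det ≠ 0 := by
  classical
  set P := (-B).charpoly
  have hP : P ≠ 0 := (charpoly_monic _).ne_zero
  have hroots : P.roots.toFinset.card < (Finset.univ : Finset k).card :=
    calc P.roots.toFinset.card ≤ P.natDegree :=
          (Multiset.toFinset_card_le _).trans (Polynomial.card_roots' P)
      _ < _ := by rwa [charpoly_natDegree_eq_dim]
  obtain ⟨u, -, hu⟩ := Finset.exists_mem_notMem_of_card_lt_card hroots
  have hu0 : u ≠ 0 := by
    rintro rfl
    refine hu (Multiset.mem_toFinset.mpr ((Polynomial.mem_roots hP).mpr ?_))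
    simp [P, eval_charpoly, hB]
  refine ⟨u⁻¹, inv_ne_zero hu0, ?_⟩
  have h : 1 + u⁻¹ • B = u⁻¹ • (scalar ι u - -B) := by
    rw [sub_neg_eq_add, smul_add, scalar_apply, ← smul_one_eq_diagonal, smul_smul,
      inv_mul_cancel₀ hu0, one_smul]
  rw [h, det_smul, ← eval_charpoly]
  exact mul_ne_zero (pow_ne_zero _ (inv_ne_zero hu0))
    fun h => hu (Multiset.mem_toFinset.mpr ((Polynomial.mem_roots hP).mpr h))

theorem exists_ne_zero_linearIndependent_add_smul [Fintype k] {ι V : Type*} [Fintype ι]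
    [AddCommGroup V] [Module k V] {F Y : ι → V} (hF : LinearIndependent k F)
    (hY : ¬ LinearIndependent k Y) (hι : Fintype.card ι < Fintype.card k) :
    ∃ t : k, t ≠ 0 ∧ LinearIndependent k fun i => F i + t • Y i := by
  classical
  obtain ⟨g, hg⟩ := (Fintype.linearCombination k F).exists_leftInverse_of_injective
    (ker_eq_bot.mpr (linearIndependent_iff_injective_fintypeLinearCombination.mp hF))
  have hgF : ∀ i, g (F i) = Pi.single i 1 := fun i => by
    simpa using congr($hg (Pi.single i 1))
  set B : Matrix ι ι k := of fun i => g (Y i)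
  have hB : B.det = 0 := by
    by_contra h
    exact hY ((linearIndependent_rows_of_det_ne_zero h).of_comp g)
  obtain ⟨t, ht, hdet⟩ := exists_ne_zero_det_one_add_smul_ne_zero hB hι
  have hrows : (g ∘ fun i => F i + t • Y i) = fun i => (1 + t • B) i := by
    ext i j
    simp [B, hgF, one_apply, Pi.single_apply, eq_comm]
  exact ⟨t, ht, .of_comp g (hrows ▸ linearIndependent_rows_of_det_ne_zero hdet)⟩

variable {V V' : Type*} [AddCommGroup V] [Module k V] [AddCommGroup V'] [Module k V']

/-- If `a w ∉ L v₀`, then `a w` and a basis `bᵢ v₀` of `L v₀` are independent; for some `t ≠ 0` the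
vectors `a w`, `bᵢ (v₀ + t w)`, which lie in `L (v₀ + t w)`, are still independent, contradicting
the maximality of `dim L v₀`. -/
theorem mem_map_applyₗ_of_forall_finrank_le [Fintype k] [FiniteDimensional k V']
    {L : Submodule k (V →ₗ[k] V')} {v₀ : V}
    (hmax : ∀ v, finrank k (L.map (applyₗ v)) ≤ finrank k (L.map (applyₗ v₀)))
    (hk : finrank k (L.map (applyₗ v₀)) + 1 < Fintype.card k)
    {a : V →ₗ[k] V'} (ha : a ∈ L) (hav : a v₀ = 0) (w : V) : a w ∈ L.map (applyₗ v₀) := by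
  set W := L.map (applyₗ v₀)
  by_contra haw
  have hpre : ∀ i, ∃ b ∈ L, b v₀ = (finBasis k W i : V') := fun i =>
    mem_map.mp (finBasis k W i).2
  choose b hbL hbv using hpre
  have hbW : (fun i => b i v₀) = W.subtype ∘ finBasis k W := funext hbv
  set F : Fin (finrank k W + 1) → V' := Fin.cons (a w) fun i => b i v₀
  set Y : Fin (finrank k W + 1) → V' := Fin.cons 0 fun i => b i w
  have hF : LinearIndependent k F := by
    refine linearIndependent_finCons.mpr ⟨?_, ?_⟩
    · rw [hbW]
      exact (finBasis k W).linearIndependent.map' _ W.ker_subtype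
    · rwa [hbW, Set.range_comp, span_image, Basis.span_eq, Submodule.map_top, range_subtype]
  have hY : ¬ LinearIndependent k Y :=
    fun h => LinearIndependent.ne_zero 0 h rfl
  obtain ⟨t, ht, hind⟩ := exists_ne_zero_linearIndependent_add_smul hF hY (by simpa using hk)
  have hmem : ∀ j, F j + t • Y j ∈ L.map (applyₗ (v₀ + t • w)) := by
    refine Fin.cases ?_ fun i => ?_
    · rw [show F 0 + t • Y 0 = t⁻¹ • applyₗ (v₀ + t • w) a by simp [F, Y, hav, smul_smul, ht]]
      exact smul_mem _ _ (mem_map_of_mem ha)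
    · rw [show F i.succ + t • Y i.succ = applyₗ (v₀ + t • w) (b i) by simp [F, Y]]
      exact mem_map_of_mem (hbL i)
  have := (finrank_span_eq_card hind).symm.trans_le
    (Submodule.finrank_mono (span_le.mpr (Set.range_subset_iff.mpr hmem)))
  have := hmax (v₀ + t • w)
  simp only [Fintype.card_fin] at *
  omega

theorem finrank_le_of_ker_ge_of_range_le [FiniteDimensional k V] [FiniteDimensional k V']
    {K : Submodule k (V →ₗ[k] V')} {U : Submodule k V} {W : Submodule k V'}
    (hU : ∀ a ∈ K, U ≤ ker a) (hW : ∀ a ∈ K, range a ≤ W) :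
    finrank k K ≤ (finrank k V - finrank k U) * finrank k W := by
  let ψ : K →ₗ[k] V ⧸ U →ₗ[k] W :=
    { toFun a := U.liftQ ((a : V →ₗ[k] V').codRestrict W fun v => hW a a.2 ⟨v, rfl⟩)
        fun u hu => by simpa using hU a a.2 hu
      map_add' a b := by ext; simp
      map_smul' c a := by ext; simp }
  have hψ : Function.Injective ψ := fun a b hab => Subtype.ext <| LinearMap.ext fun v => by
    simpa [ψ] using congr(($hab (U.mkQ v) : V'))
  have := Submodule.finrank_quotient_add_finrank U
  calc finrank k K ≤ finrank k (V ⧸ U →ₗ[k] W) := finrank_le_finrank_of_injective hψ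
    _ = _ := by rw [finrank_linearMap]; congr 1; omega

theorem eq_zero_of_isNilpotent_of_apply_eq_self {R M : Type*} [Semiring R] [AddCommMonoid M]
    [Module R M] {f : Module.End R M} (hf : IsNilpotent f) {v : M} (hv : f v = v) : v = 0 := by
  obtain ⟨N, hN⟩ := hf
  simpa [Module.End.pow_apply, Function.iterate_fixed hv] using congr(($hN) v)

theorem apply_eq_zero_of_mem_sup_span_singleton {L : Submodule k (Module.End k V)}
    {a : Module.End k V} (hcomm : ∀ b ∈ L, Commute a b) {v₀ : V} (hav : a v₀ = 0) :
    ∀ u ∈ L.map (applyₗ v₀) ⊔ span k {v₀}, a u = 0 := by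
  intro u hu
  obtain ⟨_, ⟨b, hb, rfl⟩, _, hy, rfl⟩ := mem_sup.mp hu
  obtain ⟨c, rfl⟩ := mem_span_singleton.mp hy
  have hab : a (b v₀) = b (a v₀) := LinearMap.congr_fun (hcomm b hb).eq v₀
  simp [hab, hav]

theorem map_applyₗ_eq_bot_of_mem {L : Submodule k (Module.End k V)}
    (hnil : ∀ a ∈ L, IsNilpotent a) {v₀ : V} (h : v₀ ∈ L.map (applyₗ v₀)) :
    L.map (applyₗ v₀) = ⊥ := by
  obtain ⟨c, hc, hcv⟩ := mem_map.mp h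
  obtain rfl := eq_zero_of_isNilpotent_of_apply_eq_self (hnil c hc) hcv
  exact eq_bot_iff.mpr fun _ ⟨b, _, hb⟩ => hb ▸ map_zero b

variable [Fintype k] [FiniteDimensional k V] {L : Submodule k (Module.End k V)}

theorem range_le_map_applyₗ_of_forall_finrank_le (hV : finrank k V ≤ Fintype.card k)
    (hcomm : ∀ a ∈ L, ∀ b ∈ L, Commute a b) (hnil : ∀ a ∈ L, IsNilpotent a) {v₀ : V}
    (hmax : ∀ v, finrank k (L.map (applyₗ v)) ≤ finrank k (L.map (applyₗ v₀)))
    {a : Module.End k V} (ha : a ∈ L) (hav : a v₀ = 0) : range a ≤ L.map (applyₗ v₀) := by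
  rintro _ ⟨v, rfl⟩
  by_cases hk : finrank k (L.map (applyₗ v₀)) + 1 < Fintype.card k
  · exact mem_map_applyₗ_of_forall_finrank_le hmax hk ha hav v
  -- `k` is too small for the perturbation only if `L v₀ ⊔ span k {v₀}` is already everything
  have hv₀ : v₀ ∉ L.map (applyₗ v₀) := fun h => by
    have := Fintype.one_lt_card (α := k)
    rw [map_applyₗ_eq_bot_of_mem hnil h, finrank_bot] at hk
    omega
  have htop : L.map (applyₗ v₀) ⊔ span k {v₀} = ⊤ := eq_top_of_finrank_eq <|
    (finrank_le _).antisymm (by rw [finrank_sup_span_singleton hv₀]; omega)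
  rw [apply_eq_zero_of_mem_sup_span_singleton (hcomm a ha) hav v (htop ▸ mem_top)]
  exact zero_mem _

theorem finrank_le_sq_div_four_of_commute_of_isNilpotent (hV : finrank k V ≤ Fintype.card k)
    (hcomm : ∀ a ∈ L, ∀ b ∈ L, Commute a b) (hnil : ∀ a ∈ L, IsNilpotent a) :
    finrank k L ≤ finrank k V ^ 2 / 4 := by
  have : Finite V := Module.finite_of_finite k
  obtain ⟨v₀, hmax⟩ := Finite.exists_max fun v : V => finrank k (L.map (applyₗ v))
  set W := L.map (applyₗ v₀)
  set U := W ⊔ span k {v₀}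
  set f := (applyₗ v₀ : Module.End k V →ₗ[k] V).domRestrict L
  have hrank : finrank k L = finrank k W + finrank k (ker f) := by
    rw [← f.finrank_range_add_finrank_ker, range_domRestrict]
  have hK : finrank k (ker f) ≤ (finrank k V - finrank k U) * finrank k W := by
    rw [← finrank_map_subtype_eq]
    refine finrank_le_of_ker_ge_of_range_le (fun a ha => ?_) (fun a ha => ?_) <;>
      obtain ⟨x, hx, rfl⟩ := mem_map.mp ha
    · exact apply_eq_zero_of_mem_sup_span_singleton (hcomm _ x.2) hx
    · exact range_le_map_applyₗ_of_forall_finrank_le hV hcomm hnil hmax x.2 hx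
  calc finrank k L ≤ finrank k W * (finrank k V - finrank k W) := by
        rw [hrank]
        by_cases hv₀ : v₀ ∈ W
        · have hW : W = ⊥ := map_applyₗ_eq_bot_of_mem hnil hv₀
          have h0 : finrank k W = 0 := by rw [hW, finrank_bot]
          rw [h0, mul_zero] at hK
          omega
        · have hU : finrank k U = finrank k W + 1 := finrank_sup_span_singleton hv₀
          obtain ⟨r, hr⟩ := Nat.exists_eq_add_of_le (hU ▸ finrank_le U)
          rw [hU, hr, Nat.add_sub_cancel_left] at hK
          rw [hr, show finrank k W + 1 + r - finrank k W = r + 1 by omega]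
          nlinarith
    _ ≤ finrank k V ^ 2 / 4 := Nat.mul_sub_le_sq_div_four _ _

end LinearAlgebra

theorem IsElemAbelian.map {p : ℕ} {G H : Type*} [Group G] [Group H] {E : Subgroup G}
    (hE : IsElemAbelian p E) (f : G →* H) : IsElemAbelian p (E.map f) := by
  refine ⟨?_, ?_⟩
  · rintro _ ⟨g, hg, rfl⟩ _ ⟨h, hh, rfl⟩
    rw [← map_mul, ← map_mul, hE.1 g hg h hh]
  · rintro _ ⟨g, hg, rfl⟩
    rw [← map_pow, hE.2 g hg, map_one]

theorem isElemAbelian_top_multiplicative (R : Type*) [Semiring R] (p : ℕ) [CharP R p]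
    (M : Type*) [AddCommGroup M] [Module R M] :
    IsElemAbelian p (⊤ : Subgroup (Multiplicative M)) :=
  ⟨fun g _ h _ => mul_comm g h, fun g _ => by
    rw [← ofAdd_toAdd g, ← ofAdd_nsmul, ← Nat.cast_smul_eq_nsmul R, CharP.cast_eq_zero,
      zero_smul, ofAdd_zero]⟩

section Algebra

variable {R A : Type*} [CommRing R] [Ring A] [Algebra R A]

theorem commute_of_mem_span {S : Set A} (hS : ∀ a ∈ S, ∀ b ∈ S, Commute a b) {a b : A}
    (ha : a ∈ span R S) (hb : b ∈ span R S) : Commute a b :=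
  Commute.span_left (fun a' ha' => Commute.span_right (hS a' ha') b hb) a ha

theorem isNilpotent_of_mem_span {S : Set A} (hS : ∀ a ∈ S, ∀ b ∈ S, Commute a b)
    (hnil : ∀ a ∈ S, IsNilpotent a) {a : A} (ha : a ∈ span R S) : IsNilpotent a := by
  induction ha using span_induction with
  | mem a ha => exact hnil a ha
  | zero => exact .zero
  | add a b ha hb h₁ h₂ => exact (commute_of_mem_span hS ha hb).isNilpotent_add h₁ h₂
  | smul c a _ h => exact h.smul c

theorem sub_one_pow_char_eq_zero (R : Type*) [CommRing R] [Algebra R A] (p : ℕ) [Fact p.Prime]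
    [CharP R p] {g : A} (hg : g ^ p = 1) : (g - 1) ^ p = 0 := by
  have h := congr(Polynomial.aeval g $(sub_pow_char (Polynomial.X : Polynomial R) 1))
  simpa [hg] using h

end Algebra

section FiniteField

variable {k : Type*} [Field k] [Fintype k]

theorem card_le_card_pow_finrank_span_sub_one {A : Type*} [Ring A] [Algebra k A]
    [FiniteDimensional k A] (E : Subgroup Aˣ) :
    Nat.card E ≤ Fintype.card k ^ finrank k (span k ((fun g : Aˣ => (g : A) - 1) '' E)) := by
  set L := span k ((fun g : Aˣ => (g : A) - 1) '' E)
  have : Finite A := Module.finite_of_finite k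
  let ι : E → L := fun g => ⟨((g : Aˣ) : A) - 1, subset_span ⟨g, g.2, rfl⟩⟩
  have hι : Function.Injective ι := fun g h hgh => Subtype.ext <| Units.ext <| by
    simpa [ι] using congr(($hgh : A))
  rw [← Nat.card_eq_fintype_card, ← Module.natCard_eq_pow_finrank]
  exact Nat.card_le_card_of_injective ι hι

theorem IsElemAbelian.card_le_pow_sq_div_four {V : Type*} [AddCommGroup V] [Module k V]
    [FiniteDimensional k V] {p : ℕ} [CharP k p]
    (hV : finrank k V ≤ Fintype.card k) {E : Subgroup (Module.End k V)ˣ}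
    (hE : IsElemAbelian p E) : Nat.card E ≤ Fintype.card k ^ (finrank k V ^ 2 / 4) := by
  have := Fact.mk (CharP.char_is_prime k p)
  set S := (fun g : (Module.End k V)ˣ => (g : Module.End k V) - 1) '' E
  have hS : ∀ a ∈ S, ∀ b ∈ S, Commute a b := by
    rintro _ ⟨g, hg, rfl⟩ _ ⟨h, hh, rfl⟩
    exact ((Commute.units_val (hE.1 g hg h hh)).sub_left (.one_left _)).sub_right (.one_right _)
  have hnil : ∀ a ∈ S, IsNilpotent a := by
    rintro _ ⟨g, hg, rfl⟩
    exact ⟨p, sub_one_pow_char_eq_zero k p (by rw [← Units.val_pow_eq_pow_val, hE.2 g hg]; rfl)⟩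
  calc Nat.card E ≤ Fintype.card k ^ finrank k (span k S) :=
        card_le_card_pow_finrank_span_sub_one E
    _ ≤ Fintype.card k ^ (finrank k V ^ 2 / 4) :=
        Nat.pow_le_pow_right Fintype.card_pos <|
          finrank_le_sq_div_four_of_commute_of_isNilpotent hV
            (fun _ ha _ hb => commute_of_mem_span hS ha hb) fun _ =>
              isNilpotent_of_mem_span hS hnil

end FiniteField

section Block

variable (R : Type*) [CommRing R] (ι₁ ι₂ : Type*) [Fintype ι₁] [Fintype ι₂] [DecidableEq ι₁]
  [DecidableEq ι₂]

def Matrix.unipotentFromBlocks : Multiplicative (Matrix ι₁ ι₂ R) →* GL (ι₁ ⊕ ι₂) R where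
  toFun B :=
    ⟨fromBlocks 1 B.toAdd 0 1, fromBlocks 1 (-B.toAdd) 0 1, by simp [fromBlocks_multiply],
      by simp [fromBlocks_multiply]⟩
  map_one' := by ext1; simp
  map_mul' _ _ := by ext1; simp [fromBlocks_multiply, add_comm]

theorem Matrix.unipotentFromBlocks_injective :
    Function.Injective (unipotentFromBlocks R ι₁ ι₂) := fun _ _ h =>
  (fromBlocks_inj.mp congr(($h : Matrix (ι₁ ⊕ ι₂) (ι₁ ⊕ ι₂) R))).2.1

end Block

theorem exists_isElemAbelian_card_eq_pow_mul {k : Type*} [Field k] [Fintype k] (p : ℕ)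
    [CharP k p] {ι₁ ι₂ ι : Type*}
    [Fintype ι₁] [Fintype ι₂] [Fintype ι] [DecidableEq ι₁] [DecidableEq ι₂] [DecidableEq ι]
    (e : ι₁ ⊕ ι₂ ≃ ι) :
    ∃ E : Subgroup (GL ι k), IsElemAbelian p E ∧
      Nat.card E = Fintype.card k ^ (Fintype.card ι₁ * Fintype.card ι₂) := by
  let f := (Units.map (reindexAlgEquiv k k e).toMonoidHom).comp (unipotentFromBlocks k ι₁ ι₂)
  have hf : Function.Injective f :=
    (Units.map_injective (reindexAlgEquiv k k e).injective).comp
      (unipotentFromBlocks_injective k ι₁ ι₂)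
  refine ⟨(⊤ : Subgroup _).map f, (isElemAbelian_top_multiplicative k p _).map f, ?_⟩
  rw [Subgroup.card_map_of_injective hf, Subgroup.card_top]
  change Nat.card (ι₁ → ι₂ → k) = _
  rw [Nat.card_fun, Nat.card_fun, ← pow_mul, mul_comm]
  simp only [Nat.card_eq_fintype_card]

theorem max_rank_elementary_abelian_general {p d n : ℕ} (hnp : n ≤ p)
    {k : Type*} [Field k] [Fintype k] [CharP k p] (hq : Fintype.card k = p ^ d) :
    (∀ E : Subgroup (GL (Fin n) k), IsElemAbelian p E →
      Nat.card E ≤ (p ^ d) ^ (n ^ 2 / 4)) ∧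
    ∃ E : Subgroup (GL (Fin n) k), IsElemAbelian p E ∧
      Nat.card E = (p ^ d) ^ (n ^ 2 / 4) := by
  have hd : d ≠ 0 := by
    rintro rfl
    exact (Fintype.one_lt_card (α := k)).ne' (by rw [hq, pow_zero])
  have hnk : n ≤ Fintype.card k := hq ▸ hnp.trans (Nat.le_self_pow hd p)
  rw [← hq]
  refine ⟨fun E hE => ?_, ?_⟩
  · have h := (hE.map GeneralLinearGroup.toLin.toMonoidHom).card_le_pow_sq_div_four
      (by rwa [finrank_fin_fun])
    rwa [Subgroup.card_map_of_injective (f := GeneralLinearGroup.toLin.toMonoidHom)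
      GeneralLinearGroup.toLin.injective, finrank_fin_fun] at h
  · rw [← Nat.div_two_mul_sub_div_two]
    simpa using exists_isElemAbelian_card_eq_pow_mul p
      (finSumFinEquiv.trans (finCongr (Nat.add_sub_cancel' (Nat.div_le_self n 2))))

/-- Let `p ≥ n` be a prime and `q = p^d`.  Every elementary abelian
`p`-subgroup of `GL_n(𝔽_q)` has order at most `q^⌊n²/4⌋`, and there is an elementary
abelian `p`-subgroup of `GL_n(𝔽_q)` of order exactly `q^⌊n²/4⌋`; i.e. the largest rank
of an elementary abelian `p`-subgroup of `GL_n(𝔽_q)` is `⌊n²/4⌋·d`. -/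
theorem max_rank_elementary_abelian {p d n : ℕ} (hp : p.Prime) (hnp : n ≤ p)
    {k : Type*} [Field k] [Fintype k] [CharP k p] (hq : Fintype.card k = p ^ d) :
    (∀ E : Subgroup (GL (Fin n) k), IsElemAbelian p E →
      Nat.card E ≤ (p ^ d) ^ (n ^ 2 / 4)) ∧
    ∃ E : Subgroup (GL (Fin n) k), IsElemAbelian p E ∧
      Nat.card E = (p ^ d) ^ (n ^ 2 / 4) :=
  max_rank_elementary_abelian_general hnp hq
end

section
/- Let k be a field and let n ≥ 1. Every k-linear subspace of M_n(k) all of whose elements are nilpotent and pairwise commute has dimension at most ⌊n²/4⌋, and there exists such a subspace of dimension exactly ⌊n²/4⌋ (for example, the space of matrices supported in the upper-right ⌈n/2⌉ × ⌊n/2⌋ block). -/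
/-!
Order the positions `(i, j)` of a matrix by the degree `2 ^ j - 2 ^ i`, and call a nonzero entry of
least degree of a nonzero matrix a leading entry. Degrees add up along paths,
`deg (a, m) + deg (m, c) = deg (a, c)`, and since the weights are powers of two an off-diagonal
position is determined by its degree. For a space `V` of commuting nilpotent matrices, reading off
the entries at the set `S` of leading positions of its elements is injective, so `dim V ≤ |S|`.
A leading position is never diagonal (the matrix would be upper triangular and nilpotent with a
nonzero diagonal entry), and two leading positions `(a, b)`, `(b, c)` never chain: the `(a, c)`
entry of `x * y` would be `x a b * y b c ≠ 0`, while that of `y * x` vanishes. So the rows and the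
columns occurring in `S` form disjoint sets `A`, `B` with `S ⊆ A × B`, and
`|S| ≤ |A| |B| ≤ ⌊n²/4⌋`. The bound is attained by the matrices supported in an upper-right
`⌈n/2⌉ × ⌊n/2⌋` block, any two of which multiply to zero.
-/

open Matrix

open Finset Polynomial in
theorem Matrix.IsUpperTriangular.diag_eq_zero_of_isNilpotent {R ι : Type*} [CommRing R]
    [IsDomain R] [Fintype ι] [LinearOrder ι] {M : Matrix ι ι R} (hM : M.IsUpperTriangular)
    (hnil : IsNilpotent M) (i : ι) : M i i = 0 := by
  have hchar : M.charpoly = X ^ Fintype.card ι :=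
    sub_eq_zero.mp (isNilpotent_charpoly_sub_pow_of_isNilpotent hnil).eq_zero
  have hroot : M.charpoly.eval (M i i) = 0 := by
    rw [charpoly_of_isUpperTriangular M hM, eval_prod]
    exact prod_eq_zero (mem_univ i) (by simp)
  rw [hchar, eval_pow, eval_X] at hroot
  exact IsNilpotent.eq_zero ⟨_, hroot⟩

theorem eq_of_two_pow_sub_two_pow_eq_of_lt {i j i' j' : ℕ} (hij : i < j) (hij' : i' < j')
    (h : (2 : ℤ) ^ j - 2 ^ i = 2 ^ j' - 2 ^ i') : i = i' ∧ j = j' := by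
  wlog hle : j ≤ j' generalizing i j i' j'
  · exact (this hij' hij h.symm (le_of_not_ge hle)).imp Eq.symm Eq.symm
  obtain rfl : j = j' := by
    by_contra hne
    have hj : (2 : ℤ) ^ (j + 1) ≤ 2 ^ j' := pow_le_pow_right₀ one_le_two (by omega)
    have hi' : (2 : ℤ) ^ (i' + 1) ≤ 2 ^ j' := pow_le_pow_right₀ one_le_two hij'
    have hi : (0 : ℤ) < 2 ^ i := by positivity
    rw [pow_succ] at hj hi'
    linarith
  have hi : (2 : ℤ) ^ i = 2 ^ i' := by linarith
  exact ⟨Nat.pow_right_injective le_rfl (by exact_mod_cast hi), rfl⟩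

theorem eq_of_two_pow_sub_two_pow_eq {i j i' j' : ℕ} (hij : i ≠ j)
    (h : (2 : ℤ) ^ j - 2 ^ i = 2 ^ j' - 2 ^ i') : i = i' ∧ j = j' := by
  have hpow {a b : ℕ} : (2 : ℤ) ^ a < 2 ^ b ↔ a < b := pow_lt_pow_iff_right₀ one_lt_two
  rcases hij.lt_or_gt with hlt | hgt
  · have hlt' : i' < j' := by
      by_contra! hle
      linarith [hpow.2 hlt, pow_le_pow_right₀ (one_le_two : (1 : ℤ) ≤ 2) hle]
    exact eq_of_two_pow_sub_two_pow_eq_of_lt hlt hlt' h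
  · have hgt' : j' < i' := by
      by_contra! hle
      linarith [hpow.2 hgt, pow_le_pow_right₀ (one_le_two : (1 : ℤ) ≤ 2) hle]
    exact (eq_of_two_pow_sub_two_pow_eq_of_lt hgt hgt' (by linarith)).symm

section LeadingEntry

variable {ι R : Type*} (w : ι → ℤ)

def entryDegree (p : ι × ι) : ℤ := w p.2 - w p.1

def IsLeadingEntry [Zero R] (x : Matrix ι ι R) (p : ι × ι) : Prop :=
  x p.1 p.2 ≠ 0 ∧ ∀ q : ι × ι, entryDegree w q < entryDegree w p → x q.1 q.2 = 0

variable {w}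

theorem exists_isLeadingEntry [Finite ι] [Zero R] {x : Matrix ι ι R} (hx : x ≠ 0) :
    ∃ p, IsLeadingEntry w x p := by
  obtain ⟨i, j, hij⟩ : ∃ i j, x i j ≠ 0 := by
    by_contra! h
    exact hx (Matrix.ext h)
  obtain ⟨p, hp, hmin⟩ := Set.exists_min_image {p : ι × ι | x p.1 p.2 ≠ 0} (entryDegree w)
    (Set.toFinite _) ⟨(i, j), hij⟩
  exact ⟨p, hp, fun q hq => not_not.1 fun hq0 => hq.not_ge (hmin q hq0)⟩

theorem IsLeadingEntry.fst_ne_snd [Fintype ι] [LinearOrder ι] [CommRing R] [IsDomain R]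
    (hw : StrictMono w) {x : Matrix ι ι R} {p : ι × ι} (hp : IsLeadingEntry w x p)
    (hx : IsNilpotent x) : p.1 ≠ p.2 := by
  intro hdiag
  have hupper : x.IsUpperTriangular := fun i j hji =>
    hp.2 (i, j) (by simp only [entryDegree, hdiag, sub_self]; linarith [hw (show j < i from hji)])
  exact hp.1 (hdiag ▸ hupper.diag_eq_zero_of_isNilpotent hx p.1)

variable [Fintype ι] [Semiring R] {x y : Matrix ι ι R} {a b c : ι}

theorem IsLeadingEntry.mul_apply (hw : Function.Injective w) (hx : IsLeadingEntry w x (a, b))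
    (hy : IsLeadingEntry w y (b, c)) : (x * y) a c = x a b * y b c := by
  rw [Matrix.mul_apply, Finset.sum_eq_single b (fun m _ hmb => ?_) (by simp)]
  rcases (hw.ne hmb).lt_or_gt with hlt | hgt
  · rw [hx.2 (a, m) (by simp only [entryDegree]; linarith), zero_mul]
  · rw [hy.2 (m, c) (by simp only [entryDegree]; linarith), mul_zero]

theorem IsLeadingEntry.mul_apply_eq_zero
    (hsidon : ∀ p q : ι × ι, p.1 ≠ p.2 → entryDegree w p = entryDegree w q → p = q)
    (hx : IsLeadingEntry w x (a, b)) (hy : IsLeadingEntry w y (b, c)) (hab : a ≠ b)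
    (hbc : b ≠ c) : (y * x) a c = 0 := by
  rw [Matrix.mul_apply]
  refine Finset.sum_eq_zero fun m _ => ?_
  by_cases h₁ : entryDegree w (a, m) < entryDegree w (b, c)
  · rw [hy.2 _ h₁, zero_mul]
  by_cases h₂ : entryDegree w (m, c) < entryDegree w (a, b)
  · rw [hx.2 _ h₂, mul_zero]
  have hdeg : entryDegree w (b, c) = entryDegree w (a, m) := by
    simp only [entryDegree, not_lt] at h₁ h₂ ⊢
    linarith
  exact absurd (Prod.ext_iff.1 (hsidon _ _ hbc hdeg)).1 hab.symm

theorem IsLeadingEntry.snd_ne_fst [NoZeroDivisors R] (hw : Function.Injective w)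
    (hsidon : ∀ p q : ι × ι, p.1 ≠ p.2 → entryDegree w p = entryDegree w q → p = q)
    {p q : ι × ι} (hcomm : x * y = y * x) (hx : IsLeadingEntry w x p)
    (hy : IsLeadingEntry w y q) (hp : p.1 ≠ p.2) (hq : q.1 ≠ q.2) : p.2 ≠ q.1 := by
  obtain ⟨a, b⟩ := p
  obtain ⟨b', c⟩ := q
  rintro (rfl : b = b')
  have hac := congrFun (congrFun hcomm a) c
  rw [hx.mul_apply hw hy, hx.mul_apply_eq_zero hsidon hy hp hq] at hac
  exact mul_ne_zero hx.1 hy.1 hac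

end LeadingEntry

theorem mul_le_sq_div_four_of_add_le {a b n : ℕ} (h : a + b ≤ n) : a * b ≤ n ^ 2 / 4 := by
  rw [Nat.le_div_iff_mul_le four_pos]
  nlinarith [sq_nonneg ((a : ℤ) - b)]

theorem Set.ncard_le_sq_div_four_of_snd_ne_fst {ι : Type*} [Finite ι] {S : Set (ι × ι)}
    (hS : ∀ p ∈ S, ∀ q ∈ S, p.2 ≠ q.1) : S.ncard ≤ Nat.card ι ^ 2 / 4 := by
  have hsub : S ⊆ (Prod.fst '' S) ×ˢ (Prod.snd '' S) := fun p hp =>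
    ⟨mem_image_of_mem _ hp, mem_image_of_mem _ hp⟩
  have hdisj : Disjoint (Prod.fst '' S) (Prod.snd '' S) := by
    rw [Set.disjoint_left]
    rintro _ ⟨p, hp, rfl⟩ ⟨q, hq, hqp⟩
    exact hS q hq p hp hqp
  calc S.ncard ≤ ((Prod.fst '' S) ×ˢ (Prod.snd '' S)).ncard := ncard_le_ncard hsub
    _ = (Prod.fst '' S).ncard * (Prod.snd '' S).ncard := ncard_prod
    _ ≤ Nat.card ι ^ 2 / 4 :=
      mul_le_sq_div_four_of_add_le ((ncard_union_eq hdisj).symm.trans_le (ncard_le_card _))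

section LeadingEntries

variable {ι k : Type*} [Fintype ι] [Field k] (w : ι → ℤ)

def leadingEntries (V : Submodule k (Matrix ι ι k)) : Set (ι × ι) :=
  {p | ∃ x ∈ V, IsLeadingEntry w x p}

theorem finrank_le_ncard_leadingEntries (V : Submodule k (Matrix ι ι k)) :
    Module.finrank k V ≤ (leadingEntries w V).ncard := by
  classical
  let restrict : V →ₗ[k] (leadingEntries w V → k) :=
    { toFun := fun x p => (x : Matrix ι ι k) p.1.1 p.1.2
      map_add' := fun _ _ => rfl
      map_smul' := fun _ _ => rfl }
  have hinj : Function.Injective restrict := by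
    rw [← LinearMap.ker_eq_bot, LinearMap.ker_eq_bot']
    intro x hx
    by_contra hx0
    obtain ⟨p, hp⟩ := exists_isLeadingEntry (w := w) (Submodule.coe_eq_zero.not.mpr hx0)
    exact hp.1 (congrFun hx ⟨p, x, x.2, hp⟩)
  calc Module.finrank k V ≤ Module.finrank k (leadingEntries w V → k) :=
        LinearMap.finrank_le_finrank_of_injective hinj
    _ = (leadingEntries w V).ncard := by
      rw [Module.finrank_fintype_fun_eq_card, Fintype.card_eq_nat_card, Nat.card_coe_set_eq]

variable {w}

theorem finrank_le_sq_div_four [LinearOrder ι] (hmono : StrictMono w)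
    (hsidon : ∀ p q : ι × ι, p.1 ≠ p.2 → entryDegree w p = entryDegree w q → p = q)
    (V : Submodule k (Matrix ι ι k)) (hnil : ∀ M ∈ V, IsNilpotent M)
    (hcomm : ∀ M ∈ V, ∀ N ∈ V, M * N = N * M) :
    Module.finrank k V ≤ Fintype.card ι ^ 2 / 4 := by
  rw [Fintype.card_eq_nat_card]
  refine (finrank_le_ncard_leadingEntries w V).trans
    (Set.ncard_le_sq_div_four_of_snd_ne_fst ?_)
  rintro p ⟨x, hxV, hx⟩ q ⟨y, hyV, hy⟩
  exact hx.snd_ne_fst hmono.injective hsidon (hcomm x hxV y hyV) hy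
    (hx.fst_ne_snd hmono (hnil x hxV)) (hy.fst_ne_snd hmono (hnil y hyV))

end LeadingEntries

theorem eq_of_entryDegree_two_pow_eq {n : ℕ} {p q : Fin n × Fin n} (hp : p.1 ≠ p.2)
    (h : entryDegree (fun i : Fin n => (2 : ℤ) ^ (i : ℕ)) p =
      entryDegree (fun i : Fin n => (2 : ℤ) ^ (i : ℕ)) q) : p = q := by
  obtain ⟨h₁, h₂⟩ := eq_of_two_pow_sub_two_pow_eq (Fin.val_ne_of_ne hp) h
  exact Prod.ext (Fin.ext h₁) (Fin.ext h₂)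

section SquareZero

variable (k : Type*) [Field k] (ι κ : Type*) [Fintype ι] [Fintype κ]

def fromBlocksUpperRight : Matrix ι κ k →ₗ[k] Matrix (ι ⊕ κ) (ι ⊕ κ) k where
  toFun X := fromBlocks 0 X 0 0
  map_add' X Y := by simp [fromBlocks_add]
  map_smul' c X := by simp [fromBlocks_smul]

theorem exists_submodule_mul_eq_zero_finrank_eq {ν : Type*} [Fintype ν] (e : ι ⊕ κ ≃ ν) :
    ∃ V : Submodule k (Matrix ν ν k), (∀ M ∈ V, ∀ N ∈ V, M * N = 0) ∧
      Module.finrank k V = Fintype.card ι * Fintype.card κ := by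
  let reindex := reindexLinearEquiv k k e e
  refine ⟨(LinearMap.range (fromBlocksUpperRight k ι κ)).map reindex.toLinearMap, ?_, ?_⟩
  · rintro _ ⟨_, ⟨X, rfl⟩, rfl⟩ _ ⟨_, ⟨Y, rfl⟩, rfl⟩
    simp [reindex, fromBlocksUpperRight, fromBlocks_multiply]
  · have hinj : Function.Injective (fromBlocksUpperRight k ι κ) := fun X Y h =>
      (fromBlocks_inj.1 h).2.1
    rw [LinearEquiv.finrank_map_eq, LinearMap.finrank_range_of_inj hinj, Module.finrank_matrix,
      Module.finrank_self, mul_one]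

end SquareZero

theorem sub_div_two_mul_div_two (n : ℕ) : (n - n / 2) * (n / 2) = n ^ 2 / 4 := by
  obtain ⟨m, rfl | rfl⟩ := Nat.even_or_odd' n
  · rw [show 2 * m - 2 * m / 2 = m by omega, show 2 * m / 2 = m by omega,
      show (2 * m) ^ 2 = m * m * 4 by ring, Nat.mul_div_cancel _ four_pos]
  · rw [show 2 * m + 1 - (2 * m + 1) / 2 = m + 1 by omega, show (2 * m + 1) / 2 = m by omega,
      show (2 * m + 1) ^ 2 = 1 + (m + 1) * m * 4 by ring, Nat.add_mul_div_right _ _ four_pos]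
    simp

theorem max_dim_nilpotent_commuting_subspace_general {k : Type*} [Field k] {n : ℕ} :
    (∀ V : Submodule k (Matrix (Fin n) (Fin n) k),
      (∀ M ∈ V, IsNilpotent M) → (∀ M ∈ V, ∀ N ∈ V, M * N = N * M) →
      Module.finrank k V ≤ n ^ 2 / 4) ∧
    ∃ V : Submodule k (Matrix (Fin n) (Fin n) k),
      (∀ M ∈ V, IsNilpotent M) ∧ (∀ M ∈ V, ∀ N ∈ V, M * N = N * M) ∧
      Module.finrank k V = n ^ 2 / 4 := by
  refine ⟨fun V hnil hcomm => ?_, ?_⟩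
  · simpa using finrank_le_sq_div_four (w := fun i : Fin n => (2 : ℤ) ^ (i : ℕ))
      (fun i j hij => pow_lt_pow_right₀ one_lt_two hij) (fun _ _ => eq_of_entryDegree_two_pow_eq)
      V hnil hcomm
  · obtain ⟨V, hV, hdim⟩ := exists_submodule_mul_eq_zero_finrank_eq k
      (Fin (n - n / 2)) (Fin (n / 2))
      (finSumFinEquiv.trans (finCongr (Nat.sub_add_cancel (Nat.div_le_self n 2))))
    refine ⟨V, fun M hM => ⟨2, by rw [sq, hV M hM M hM]⟩, fun M hM N hN => by
      rw [hV M hM N hN, hV N hN M hM], ?_⟩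
    rw [hdim, Fintype.card_fin, Fintype.card_fin, sub_div_two_mul_div_two]

/-- Over any field `k` and for `n ≥ 1`, every `k`-linear subspace of
`M_n(k)` consisting of pairwise-commuting nilpotent matrices has dimension at most
`⌊n²/4⌋`, and there exists such a subspace of dimension exactly `⌊n²/4⌋`. -/
theorem max_dim_nilpotent_commuting_subspace {k : Type*} [Field k] {n : ℕ} (hn : 1 ≤ n) :
    (∀ V : Submodule k (Matrix (Fin n) (Fin n) k),
      (∀ M ∈ V, IsNilpotent M) → (∀ M ∈ V, ∀ N ∈ V, M * N = N * M) →
      Module.finrank k V ≤ n ^ 2 / 4) ∧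
    ∃ V : Submodule k (Matrix (Fin n) (Fin n) k),
      (∀ M ∈ V, IsNilpotent M) ∧ (∀ M ∈ V, ∀ N ∈ V, M * N = N * M) ∧
      Module.finrank k V = n ^ 2 / 4 :=
  max_dim_nilpotent_commuting_subspace_general
end

section
/- Let k be a field. There is no g ∈ GL_3(k) such that g·span_k{E_12, E_13}·g^{−1} = span_k{E_23, E_13}; that is, the two 2-dimensional elementary subalgebras span{E_12, E_13} and span{E_23, E_13} of gl_3 are not GL_3-conjugate. -/
open Matrix

/-
Every element of `span{E₁₂, E₁₃}` is a rank-one matrix `e₁ wᵀ`, so every element of its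
conjugate by `g` has the form `u wᵀ` for the single column vector `u = g e₁`. If both `E₂₃` and
`E₁₃` were of this form, `E₂₃ = u wᵀ` would force `u₁ = 0` while `E₁₃ = u w'ᵀ` needs `u₁ ≠ 0`.
-/

namespace Matrix

variable {R m n : Type*} [CommSemiring R]

theorem span_single_pair_le_range_vecMulVecBilin [DecidableEq m] [DecidableEq n]
    (i : m) (j l : n) :
    Submodule.span R {single i j (1 : R), single i l 1} ≤
      LinearMap.range (vecMulVecBilin R R (Pi.single i 1 : m → R)) := by
  rw [Submodule.span_le, Set.insert_subset_iff, Set.singleton_subset_iff]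
  exact ⟨⟨Pi.single j 1, (single_eq_single_vecMulVec_single i j).symm⟩,
    ⟨Pi.single l 1, (single_eq_single_vecMulVec_single i l).symm⟩⟩

theorem mul_mul_mem_range_vecMulVecBilin {l p : Type*} [Fintype m] [Fintype n] {u : m → R}
    {M : Matrix m n R} (hM : M ∈ LinearMap.range (vecMulVecBilin R R u)) (G : Matrix l m R)
    (H : Matrix n p R) :
    G * M * H ∈ LinearMap.range (vecMulVecBilin R R (G *ᵥ u)) := by
  obtain ⟨w, rfl⟩ := hM
  exact ⟨w ᵥ* H, by rw [vecMulVecBilin_apply_apply, vecMulVecBilin_apply_apply, mul_vecMulVec,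
    vecMulVec_mul]⟩

theorem apply_eq_zero_of_vecMulVec_eq_single [DecidableEq m] [DecidableEq n] {u : m → R}
    {w : n → R} {a a' : m} {b : n} (h : vecMulVec u w = single a b 1) (ha : a' ≠ a) :
    u a' = 0 := by
  have h₁ : u a * w b = 1 := by
    rw [← vecMulVec_apply, h, single_apply_same]
  have h₀ : u a' * w b = 0 := by
    rw [← vecMulVec_apply, h, single_apply_of_row_ne ha.symm]
  calc u a' = u a' * (u a * w b) := by rw [h₁, mul_one]
    _ = u a * (u a' * w b) := by ring
    _ = 0 := by rw [h₀, mul_zero]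

theorem vecMulVec_ne_single_of_vecMulVec_eq_single [Nontrivial R] [DecidableEq m]
    [DecidableEq n] {u : m → R} {w : n → R} {a a' : m} {b : n}
    (h : vecMulVec u w = single a b 1) (ha : a' ≠ a) (w' : n → R) (b' : n) :
    vecMulVec u w' ≠ single a' b' 1 := by
  intro h'
  have h₁ : u a' * w' b' = 1 := by
    rw [← vecMulVec_apply, h', single_apply_same]
  rw [apply_eq_zero_of_vecMulVec_eq_single h ha, zero_mul] at h₁
  exact zero_ne_one h₁

end Matrix

/-- Over any field `k`, there is no `g ∈ GL_3(k)` conjugating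
`span{E₁₂, E₁₃}` to `span{E₂₃, E₁₃}`: these two 2-dimensional elementary subalgebras of
`gl₃` are not `GL₃`-conjugate. -/
theorem span_E12_E13_not_conjugate_span_E23_E13 {k : Type*} [Field k] :
    ¬ ∃ g : GL (Fin 3) k,
      (fun M => (g : Matrix (Fin 3) (Fin 3) k) * M *
          ((g⁻¹ : GL (Fin 3) k) : Matrix (Fin 3) (Fin 3) k)) ''
        ((Submodule.span k
          {Matrix.single (0 : Fin 3) (1 : Fin 3) (1 : k),
            Matrix.single (0 : Fin 3) (2 : Fin 3) (1 : k)} :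
          Submodule k (Matrix (Fin 3) (Fin 3) k)) : Set (Matrix (Fin 3) (Fin 3) k)) =
      ((Submodule.span k
        {Matrix.single (1 : Fin 3) (2 : Fin 3) (1 : k),
          Matrix.single (0 : Fin 3) (2 : Fin 3) (1 : k)} :
        Submodule k (Matrix (Fin 3) (Fin 3) k)) : Set (Matrix (Fin 3) (Fin 3) k)) := by
  rintro ⟨g, hg⟩
  have h_rank_one : ∀ M ∈ Submodule.span k
      {Matrix.single (1 : Fin 3) (2 : Fin 3) (1 : k), Matrix.single (0 : Fin 3) (2 : Fin 3) 1},
      ∃ w, vecMulVec ((g : Matrix (Fin 3) (Fin 3) k) *ᵥ Pi.single 0 1) w = M := by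
    intro M hM
    rw [← SetLike.mem_coe, ← hg] at hM
    obtain ⟨X, hX, rfl⟩ := hM
    exact mul_mul_mem_range_vecMulVecBilin (span_single_pair_le_range_vecMulVecBilin 0 1 2 hX) _ _
  obtain ⟨w, hw⟩ := h_rank_one _ (Submodule.subset_span (Set.mem_insert _ _))
  obtain ⟨w', hw'⟩ := h_rank_one _ (Submodule.subset_span (Set.mem_insert_of_mem _ rfl))
  exact vecMulVec_ne_single_of_vecMulVec_eq_single hw (by decide) w' 2 hw'
end

section
/- Let p ≥ 3 be a prime and let E ⊆ GL_3(F_p) be the subgroup generated by g = I + E_12 + E_23 and h = I + E_13. Then E is an elementary abelian p-group of order p²; the normalizer of E in GL_3(F_p) equals the set of invertible upper-triangular matrices (a b c; 0 d e; 0 0 f) satisfying af = d²; this normalizer has order p³(p−1)²; and the number of GL_3(F_p)-conjugates of E is (p²+p+1)(p+1)(p−1). -/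
/-!
The matrices `heis a c = !![1, a, c; 0, 1, a; 0, 0, 1]` multiply by
`heis a c * heis a' c' = heis (a + a') (c + c' + a a')`, so they form an abelian group containing
`g = heis 1 0` and `h = heis 0 1`, and `heis a c ^ n = heis (n a) (n c + (n choose 2) a²)` shows
both that `g` and `h` generate it and that it has exponent `p` when `p` is odd.

If `x` normalizes it, then `x (I + E₁₃) x⁻¹ = I + x E₁₃ x⁻¹` lies in it, which forces `x` to be
upper triangular; conjugating `g` then gives `af = d²`. Conversely such an `x` is determined by
`(a, d, b, c, e) ∈ (F^×)² × F³`, and conjugates `heis a' c'` to `heis (a' a / d) _`. The number of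
conjugates is the index of the normalizer, by orbit–stabilizer for `ConjAct`.
-/

open Matrix

section Conjugates

variable {G : Type*} [Group G]

open Pointwise in
theorem Subgroup.card_conjugates_eq_index_normalizer (H : Subgroup G) :
    Nat.card {K : Subgroup G // ∃ a : G, H.map (MulAut.conj a).toMonoidHom = K} =
      (normalizer (H : Set G)).index := by
  have horbit : {K : Subgroup G | ∃ a : G, H.map (MulAut.conj a).toMonoidHom = K} =
      MulAction.orbit (ConjAct G) H := by
    ext K
    exact (ConjAct.toConjAct.surjective.exists).trans (by rfl)
  have hstab : MulAction.stabilizer (ConjAct G) H =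
      (normalizer (H : Set G)).comap (ConjAct.ofConjAct : ConjAct G ≃* G).toMonoidHom := by
    ext g
    exact conjAct_pointwise_smul_iff
  rw [← Set.coe_ofPred, horbit, Nat.card_coe_set_eq, ← MulAction.index_stabilizer, hstab]
  exact index_comap_of_surjective _ ConjAct.ofConjAct.surjective

end Conjugates

section Heisenberg

variable {R : Type*} [CommRing R]

def heisMatrix (a c : R) : Matrix (Fin 3) (Fin 3) R := !![1, a, c; 0, 1, a; 0, 0, 1]

theorem heisMatrix_mul_heisMatrix (a c a' c' : R) :
    heisMatrix a c * heisMatrix a' c' = heisMatrix (a + a') (c + c' + a * a') := by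
  ext i j
  fin_cases i <;> fin_cases j <;> simp [heisMatrix, mul_apply, Fin.sum_univ_three] <;> ring

theorem heisMatrix_zero_zero : heisMatrix (0 : R) 0 = 1 := by
  ext i j
  fin_cases i <;> fin_cases j <;> rfl

def heis (a c : R) : GL (Fin 3) R :=
  ⟨heisMatrix a c, heisMatrix (-a) (a ^ 2 - c),
    by rw [heisMatrix_mul_heisMatrix, ← heisMatrix_zero_zero]; congr 1 <;> ring,
    by rw [heisMatrix_mul_heisMatrix, ← heisMatrix_zero_zero]; congr 1 <;> ring⟩

@[simp]
theorem coe_heis (a c : R) : (heis a c : Matrix (Fin 3) (Fin 3) R) = heisMatrix a c := rfl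

theorem heis_mul_heis (a c a' c' : R) : heis a c * heis a' c' = heis (a + a') (c + c' + a * a') :=
  Units.ext (heisMatrix_mul_heisMatrix a c a' c')

theorem heis_zero_zero : heis (0 : R) 0 = 1 := Units.ext heisMatrix_zero_zero

theorem heis_inv (a c : R) : (heis a c)⁻¹ = heis (-a) (a ^ 2 - c) := Units.ext rfl

theorem heis_injective : Function.Injective fun q : R × R ↦ heis q.1 q.2 := by
  rintro ⟨a, c⟩ ⟨a', c'⟩ h
  have h' := congrArg (fun x : GL (Fin 3) R ↦ ((x : Matrix (Fin 3) (Fin 3) R) 0 1,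
    (x : Matrix (Fin 3) (Fin 3) R) 0 2)) h
  simpa [heisMatrix] using h'

theorem heis_commute (a c a' c' : R) : Commute (heis a c) (heis a' c') := by
  rw [Commute, SemiconjBy, heis_mul_heis, heis_mul_heis]
  congr 1 <;> ring

theorem heis_pow (a c : R) (n : ℕ) :
    heis a c ^ n = heis (n * a) (n * c + n.choose 2 * a ^ 2) := by
  induction n with
  | zero => simp [heis_zero_zero]
  | succ n ih =>
    rw [pow_succ, ih, heis_mul_heis, Nat.choose_succ_succ', Nat.choose_one_right]
    congr 1 <;> push_cast <;> ring

theorem heis_pow_char (p : ℕ) [CharP R p] (hp : p.Prime) (hp2 : p ≠ 2) (a c : R) :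
    heis a c ^ p = 1 := by
  have hchoose : ((p.choose 2 : ℕ) : R) = 0 :=
    (CharP.cast_eq_zero_iff R p _).2 (hp.dvd_choose_self two_ne_zero (hp.two_le.lt_of_ne' hp2))
  rw [heis_pow, hchoose, CharP.cast_eq_zero, zero_mul, zero_mul, zero_add, zero_mul,
    heis_zero_zero]

variable (R) in
def heisSubgroup : Subgroup (GL (Fin 3) R) where
  carrier := {x | ∃ a c : R, heis a c = x}
  one_mem' := ⟨0, 0, heis_zero_zero⟩
  mul_mem' := by
    rintro _ _ ⟨a, c, rfl⟩ ⟨a', c', rfl⟩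
    exact ⟨_, _, (heis_mul_heis a c a' c').symm⟩
  inv_mem' := by
    rintro _ ⟨a, c, rfl⟩
    exact ⟨_, _, (heis_inv a c).symm⟩

theorem mem_heisSubgroup {x : GL (Fin 3) R} : x ∈ heisSubgroup R ↔ ∃ a c : R, heis a c = x :=
  Iff.rfl

theorem heis_mem_heisSubgroup (a c : R) : heis a c ∈ heisSubgroup R := ⟨a, c, rfl⟩

theorem heisSubgroup_mul_comm {x y : GL (Fin 3) R} (hx : x ∈ heisSubgroup R)
    (hy : y ∈ heisSubgroup R) : x * y = y * x := by
  obtain ⟨a, c, rfl⟩ := hx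
  obtain ⟨a', c', rfl⟩ := hy
  exact heis_commute a c a' c'

theorem heisSubgroup_pow_char (p : ℕ) [CharP R p] (hp : p.Prime) (hp2 : p ≠ 2)
    {x : GL (Fin 3) R} (hx : x ∈ heisSubgroup R) : x ^ p = 1 := by
  obtain ⟨a, c, rfl⟩ := hx
  exact heis_pow_char p hp hp2 a c

theorem card_heisSubgroup : Nat.card (heisSubgroup R) = Nat.card R ^ 2 := by
  have e : R × R ≃ heisSubgroup R :=
    Equiv.ofBijective (fun q ↦ ⟨heis q.1 q.2, heis_mem_heisSubgroup q.1 q.2⟩)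
      ⟨fun q q' h ↦ heis_injective (congrArg Subtype.val h),
        fun ⟨_, a, c, hx⟩ ↦ ⟨(a, c), Subtype.ext hx⟩⟩
  rw [← Nat.card_congr e, Nat.card_prod, sq]

theorem closure_heis_one_zero_heis_zero_one (n : ℕ) [NeZero n] :
    Subgroup.closure {heis (1 : ZMod n) 0, heis 0 1} = heisSubgroup (ZMod n) := by
  refine le_antisymm ((Subgroup.closure_le _).2 ?_) ?_
  · rintro _ (rfl | rfl) <;> exact heis_mem_heisSubgroup _ _
  · rintro _ ⟨a, c, rfl⟩
    have hgen : heis a c = heis 1 0 ^ a.val * heis 0 1 ^ (c - a.val.choose 2).val := by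
      simp only [heis_pow, heis_mul_heis, ZMod.natCast_val, ZMod.cast_id', id]
      congr 1 <;> ring
    rw [hgen]
    exact mul_mem (pow_mem (Subgroup.subset_closure (by simp)) _)
      (pow_mem (Subgroup.subset_closure (by simp)) _)

theorem conj_mem_heisSubgroup_iff {x n : GL (Fin 3) R} :
    x * n * x⁻¹ ∈ heisSubgroup R ↔ ∃ a c : R, x.val * n.val = heisMatrix a c * x.val := by
  simp only [mem_heisSubgroup, eq_comm (a := heis _ _), mul_inv_eq_iff_eq_mul, Units.ext_iff,
    Units.val_mul, coe_heis]

end Heisenberg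

section Normalizer

variable {K : Type*} [Field K]

variable (K) in
def heisNormalizerSet : Set (GL (Fin 3) K) :=
  {x | x.val 1 0 = 0 ∧ x.val 2 0 = 0 ∧ x.val 2 1 = 0 ∧ x.val 0 0 * x.val 2 2 = x.val 1 1 ^ 2}

theorem upperTriangular_of_conj_heis_zero_one_mem {x : GL (Fin 3) K}
    (hx : x * heis 0 1 * x⁻¹ ∈ heisSubgroup K) :
    x.val 1 0 = 0 ∧ x.val 2 0 = 0 ∧ x.val 2 1 = 0 := by
  obtain ⟨α, γ, hαγ⟩ := conj_mem_heisSubgroup_iff.1 hx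
  have hdet := x.det_ne_zero
  rw [det_fin_three] at hdet
  have e00 := congrFun₂ hαγ 0 0
  have e01 := congrFun₂ hαγ 0 1
  have e02 := congrFun₂ hαγ 0 2
  have e11 := congrFun₂ hαγ 1 1
  have e12 := congrFun₂ hαγ 1 2
  have e22 := congrFun₂ hαγ 2 2
  simp only [coe_heis, heisMatrix, Fin.isValue, mul_apply, of_apply, cons_val', cons_val_zero,
    cons_val_one, cons_val, cons_val_fin_one, Fin.sum_univ_three, mul_one, one_mul, mul_zero,
    zero_mul, add_zero, zero_add, left_eq_add, mul_eq_zero, add_eq_right] at e00 e01 e02 e11 e12 e22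
  -- For `α ≠ 0` the bottom row of `x` vanishes, for `α = γ = 0` its first column does.
  have hα : α = 0 := by
    by_contra hα
    have h21 := e11.resolve_left hα
    have h10 : x.val 1 0 = 0 := mul_left_cancel₀ hα (by linear_combination -e00 - γ * e22)
    have h22 : x.val 2 2 = 0 := mul_left_cancel₀ hα (by linear_combination h10 - e12)
    exact hdet (by rw [h10, h21, h22, e22]; ring)
  subst hα
  have h10 : x.val 1 0 = 0 := by linear_combination e12
  have hγ : γ ≠ 0 := by
    rintro rfl
    have h00 : x.val 0 0 = 0 := by linear_combination e02
    exact hdet (by rw [h00, h10, e22]; ring)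
  exact ⟨h10, e22, mul_left_cancel₀ hγ (by linear_combination -e01)⟩

theorem mul_eq_sq_of_conj_heis_one_zero_mem {x : GL (Fin 3) K} (h21 : x.val 2 1 = 0)
    (hx : x * heis 1 0 * x⁻¹ ∈ heisSubgroup K) : x.val 0 0 * x.val 2 2 = x.val 1 1 ^ 2 := by
  obtain ⟨β, δ, hβδ⟩ := conj_mem_heisSubgroup_iff.1 hx
  have e01 := congrFun₂ hβδ 0 1
  have e12 := congrFun₂ hβδ 1 2
  simp only [coe_heis, heisMatrix, Fin.isValue, mul_apply, of_apply, cons_val', cons_val_zero,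
    cons_val_one, cons_val, cons_val_fin_one, Fin.sum_univ_three, mul_one, one_mul, mul_zero,
    zero_mul, add_zero, zero_add] at e01 e12
  linear_combination x.val 2 2 * e01 - x.val 1 1 * e12 + δ * x.val 2 2 * h21

theorem det_of_mem_heisNormalizerSet {x : GL (Fin 3) K} (hx : x ∈ heisNormalizerSet K) :
    x.val.det = x.val 0 0 * x.val 1 1 * x.val 2 2 := by
  obtain ⟨h10, h20, h21, -⟩ := hx
  rw [det_fin_three, h10, h20, h21]
  ring

theorem diag_ne_zero_of_mem_heisNormalizerSet {x : GL (Fin 3) K} (hx : x ∈ heisNormalizerSet K) :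
    x.val 0 0 ≠ 0 ∧ x.val 1 1 ≠ 0 ∧ x.val 2 2 ≠ 0 := by
  have hdet := x.det_ne_zero
  rw [det_of_mem_heisNormalizerSet hx] at hdet
  simp_all

theorem inv_mem_heisNormalizerSet {x : GL (Fin 3) K} (hx : x ∈ heisNormalizerSet K) :
    x⁻¹ ∈ heisNormalizerSet K := by
  obtain ⟨hA, hD, hF⟩ := diag_ne_zero_of_mem_heisNormalizerSet hx
  have hdet := det_of_mem_heisNormalizerSet hx
  obtain ⟨h10, h20, h21, hAF⟩ := hx
  simp only [heisNormalizerSet, Set.mem_ofPred_eq, coe_units_inv, inv_def, hdet,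
    Ring.inverse_eq_inv', _root_.mul_inv_rev, adjugate_fin_three, h10, h20, h21, mul_zero, zero_mul,
    sub_zero, add_zero, neg_zero, sub_self, Matrix.smul_apply, of_apply, cons_val',
    cons_val_zero, cons_val_fin_one, cons_val_one, smul_eq_mul, cons_val, true_and]
  field_simp
  linear_combination -hAF

theorem conj_heis_mem_of_mem_heisNormalizerSet {x : GL (Fin 3) K} (hx : x ∈ heisNormalizerSet K)
    (a c : K) : x * heis a c * x⁻¹ ∈ heisSubgroup K := by
  obtain ⟨hA, hD, hF⟩ := diag_ne_zero_of_mem_heisNormalizerSet hx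
  obtain ⟨h10, h20, h21, hAF⟩ := hx
  refine conj_mem_heisSubgroup_iff.2 ⟨a * x.val 0 0 / x.val 1 1,
    (a * x.val 0 1 + c * x.val 0 0 - a * x.val 0 0 * x.val 1 2 / x.val 1 1) / x.val 2 2, ?_⟩
  ext i j
  fin_cases i <;> fin_cases j <;>
    simp only [coe_heis, heisMatrix, Fin.zero_eta, Fin.isValue, Fin.mk_one, Fin.reduceFinMk,
      mul_apply, of_apply, cons_val', cons_val_zero, cons_val_one, cons_val, cons_val_fin_one,
      Fin.sum_univ_three, mul_one, one_mul, mul_zero, zero_mul, add_zero, zero_add, h10, h20, h21] <;>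
    field_simp <;> (first | ring1 | linear_combination (-a) * hAF)

theorem normalizer_heisSubgroup :
    (Subgroup.normalizer (heisSubgroup K : Set (GL (Fin 3) K)) : Set (GL (Fin 3) K)) =
      heisNormalizerSet K := by
  ext x
  refine ⟨fun hx ↦ ?_, fun hx ↦ Subgroup.mem_normalizer_iff.2 fun n ↦ ⟨?_, fun hn ↦ ?_⟩⟩
  · have hconj (a c : K) : x * heis a c * x⁻¹ ∈ heisSubgroup K :=
      (Subgroup.mem_normalizer_iff.1 hx _).1 (heis_mem_heisSubgroup a c)
    obtain ⟨h10, h20, h21⟩ := upperTriangular_of_conj_heis_zero_one_mem (hconj 0 1)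
    exact ⟨h10, h20, h21, mul_eq_sq_of_conj_heis_one_zero_mem h21 (hconj 1 0)⟩
  · rintro ⟨a, c, rfl⟩
    exact conj_heis_mem_of_mem_heisNormalizerSet hx a c
  · obtain ⟨a, c, hn⟩ := hn
    simpa [hn, mul_assoc] using
      conj_heis_mem_of_mem_heisNormalizerSet (inv_mem_heisNormalizerSet hx) a c

noncomputable def heisNormalizerSetEquiv : heisNormalizerSet K ≃ Kˣ × Kˣ × K × K × K where
  toFun x :=
    (Units.mk0 _ (diag_ne_zero_of_mem_heisNormalizerSet x.2).1,
      Units.mk0 _ (diag_ne_zero_of_mem_heisNormalizerSet x.2).2.1,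
      x.1.val 0 1, x.1.val 0 2, x.1.val 1 2)
  invFun := fun ⟨a, d, b, c, e⟩ ↦
    ⟨GeneralLinearGroup.mkOfDetNeZero !![(a : K), b, c; 0, d, e; 0, 0, d ^ 2 / a]
      (by simp [det_fin_three]), rfl, rfl, rfl, mul_div_cancel₀ _ a.ne_zero⟩
  left_inv := by
    rintro ⟨x, hx⟩
    obtain ⟨hA, -, -⟩ := diag_ne_zero_of_mem_heisNormalizerSet hx
    obtain ⟨h10, h20, h21, hAF⟩ := hx
    ext i j
    fin_cases i <;> fin_cases j <;> simp [h10, h20, h21, ← hAF, hA]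
  right_inv := by
    rintro ⟨a, d, b, c, e⟩
    simp [GeneralLinearGroup.mkOfDetNeZero]

theorem card_normalizer_heisSubgroup [Fintype K] :
    Nat.card (Subgroup.normalizer (heisSubgroup K : Set (GL (Fin 3) K))) =
      Fintype.card K ^ 3 * (Fintype.card K - 1) ^ 2 := by
  rw [← SetLike.coe_sort_coe, normalizer_heisSubgroup, Nat.card_congr heisNormalizerSetEquiv]
  simp only [Nat.card_prod, Nat.card_units, Nat.card_eq_fintype_card, Fintype.card_prod]
  ring

theorem index_normalizer_heisSubgroup [Fintype K] :
    (Subgroup.normalizer (heisSubgroup K : Set (GL (Fin 3) K))).index =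
      (Fintype.card K ^ 2 + Fintype.card K + 1) * (Fintype.card K + 1) * (Fintype.card K - 1) := by
  have hmul := (Subgroup.normalizer (heisSubgroup K : Set (GL (Fin 3) K))).index_mul_card
  rw [card_normalizer_heisSubgroup, card_GL_field, Fin.prod_univ_three] at hmul
  simp only [Fin.val_zero, Fin.val_one, Fin.val_two] at hmul
  set q := Fintype.card K
  have hq : 1 < q := Fintype.one_lt_card
  have hGL : (q ^ 3 - q ^ 0) * (q ^ 3 - q ^ 1) * (q ^ 3 - q ^ 2) =
      (q ^ 2 + q + 1) * (q + 1) * (q - 1) * (q ^ 3 * (q - 1) ^ 2) := by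
    have h0 : q ^ 0 ≤ q ^ 3 := Nat.pow_le_pow_right hq.le (by norm_num)
    have h1 : q ^ 1 ≤ q ^ 3 := Nat.pow_le_pow_right hq.le (by norm_num)
    have h2 : q ^ 2 ≤ q ^ 3 := Nat.pow_le_pow_right hq.le (by norm_num)
    zify [h0, h1, h2, hq.le]
    ring
  exact Nat.eq_of_mul_eq_mul_right (Nat.mul_pos (by positivity) (pow_pos (by omega) 2))
    (hmul.trans hGL)

end Normalizer

/-- For a prime `p ≥ 3`, the subgroup `E ⊆ GL_3(𝔽_p)` generated by
`g = I + E₁₂ + E₂₃` and `h = I + E₁₃` is elementary abelian of order `p²`; its normalizer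
is the set of invertible upper-triangular matrices `(a b c; 0 d e; 0 0 f)` with `af = d²`,
of order `p³(p-1)²`; and `E` has exactly `(p²+p+1)(p+1)(p-1)` conjugates in `GL_3(𝔽_p)`. -/
theorem GL3_heisenberg_elementary_abelian (p : ℕ) [Fact p.Prime] (hp3 : 3 ≤ p)
    (g h : GL (Fin 3) (ZMod p))
    (hg : (g : Matrix (Fin 3) (Fin 3) (ZMod p)) = !![1, 1, 0; 0, 1, 1; 0, 0, 1])
    (hh : (h : Matrix (Fin 3) (Fin 3) (ZMod p)) = !![1, 0, 1; 0, 1, 0; 0, 0, 1]) :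
    ∀ E : Subgroup (GL (Fin 3) (ZMod p)), E = Subgroup.closure {g, h} →
      (∀ x ∈ E, ∀ y ∈ E, x * y = y * x) ∧
      (∀ x ∈ E, x ^ p = 1) ∧
      Nat.card E = p ^ 2 ∧
      (Subgroup.normalizer (E : Set (GL (Fin 3) (ZMod p))) : Set (GL (Fin 3) (ZMod p))) =
        {x : GL (Fin 3) (ZMod p) |
          (x : Matrix (Fin 3) (Fin 3) (ZMod p)) 1 0 = 0 ∧
          (x : Matrix (Fin 3) (Fin 3) (ZMod p)) 2 0 = 0 ∧
          (x : Matrix (Fin 3) (Fin 3) (ZMod p)) 2 1 = 0 ∧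
          (x : Matrix (Fin 3) (Fin 3) (ZMod p)) 0 0 *
              (x : Matrix (Fin 3) (Fin 3) (ZMod p)) 2 2 =
            (x : Matrix (Fin 3) (Fin 3) (ZMod p)) 1 1 ^ 2} ∧
      Nat.card (Subgroup.normalizer (E : Set (GL (Fin 3) (ZMod p)))) = p ^ 3 * (p - 1) ^ 2 ∧
      Nat.card {K : Subgroup (GL (Fin 3) (ZMod p)) //
          ∃ a : GL (Fin 3) (ZMod p), Subgroup.map (MulAut.conj a).toMonoidHom E = K} =
        (p ^ 2 + p + 1) * (p + 1) * (p - 1) := by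
  intro E hE
  have hg' : g = heis 1 0 := Units.ext (by rw [hg]; rfl)
  have hh' : h = heis 0 1 := Units.ext (by rw [hh]; rfl)
  rw [hg', hh', closure_heis_one_zero_heis_zero_one] at hE
  subst hE
  refine ⟨fun x hx y hy ↦ heisSubgroup_mul_comm hx hy,
    fun x hx ↦ heisSubgroup_pow_char p Fact.out (by omega) hx, ?_, normalizer_heisSubgroup, ?_, ?_⟩
  · rw [card_heisSubgroup, Nat.card_zmod]
  · rw [card_normalizer_heisSubgroup, ZMod.card]
  · rw [Subgroup.card_conjugates_eq_index_normalizer, index_normalizer_heisSubgroup, ZMod.card]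
end
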